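/- arXiv:2510.18855 — 6 statements merged into one kernel-verified Lean document; each statement's English description precedes it below -/
import Mathlib

section
/- Under the hypotheses of the one-step discrepancy bound, if additionally δ(θ) ≥ 2κ/η where η = c and κ = M + (L/2)·μ̄·G², then δ(θ') ≥ (1 + (η/2)·μ)·δ(θ). -/
/-!
A second-order Taylor bound gives `δ(θ + μg) ≥ δ(θ) + μ⟪∇δ(θ), g⟫ - (L/2)μ²‖g‖²`. Splitting
`g = g* + b`, the bias term contributes at least `cμ δ(θ)` and everything else costs at most
`μκ`, so `δ(θ') ≥ (1 + cμ) δ(θ) - μκ`. When `δ(θ) ≥ 2κ/c`, the loss `μκ` is at most half the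
gain `cμ δ(θ)`.

If `L < 0` the Taylor bound forces the space to be trivial; then `b = 0`, so `δ(θ) ≤ 0` and
`θ' = θ`, and the claim is immediate.
-/

open scoped RealInnerProductSpace

variable {E : Type*} [NormedAddCommGroup E] [InnerProductSpace ℝ E]

def QuadraticRemainderBound (δ : E → ℝ) (grad : E → E) (L : ℝ) : Prop :=
  ∀ θ Δ : E, |δ (θ + Δ) - δ θ - ⟪grad θ, Δ⟫| ≤ L / 2 * ‖Δ‖ ^ 2

namespace QuadraticRemainderBound

variable {δ : E → ℝ} {grad : E → E} {L : ℝ}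

theorem nonneg [Nontrivial E] (hL : QuadraticRemainderBound δ grad L) : 0 ≤ L := by
  obtain ⟨Δ, hΔ⟩ := exists_ne (0 : E)
  have hrem : 0 ≤ L / 2 * ‖Δ‖ ^ 2 := (abs_nonneg _).trans (hL 0 Δ)
  have hhalf : 0 ≤ L / 2 := nonneg_of_mul_nonneg_left hrem (by positivity)
  linarith

theorem le_apply_add (hL : QuadraticRemainderBound δ grad L) (θ Δ : E) :
    δ θ + ⟪grad θ, Δ⟫ - L / 2 * ‖Δ‖ ^ 2 ≤ δ (θ + Δ) := by
  linarith [(abs_le.mp (hL θ Δ)).1]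

theorem one_step_lower_bound (hL : QuadraticRemainderBound δ grad L) (hL₀ : 0 ≤ L)
    {θ g gs b : E} {c M G μ μbar : ℝ} (hg : g = gs + b)
    (hbias : c * δ θ ≤ ⟪grad θ, b⟫) (hstar : |⟪grad θ, gs⟫| ≤ M) (hgnorm : ‖g‖ ≤ G)
    (hμ : 0 ≤ μ) (hμbar : μ ≤ μbar) :
    (1 + c * μ) * δ θ - μ * (M + L / 2 * μbar * G ^ 2) ≤ δ (θ + μ • g) := by
  have hinner : μ * (c * δ θ - M) ≤ ⟪grad θ, μ • g⟫ := by
    rw [real_inner_smul_right, hg, inner_add_right]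
    gcongr
    linarith [(abs_le.mp hstar).1]
  have hnorm : ‖μ • g‖ ^ 2 ≤ μ * (μbar * G ^ 2) := by
    rw [norm_smul, Real.norm_of_nonneg hμ, mul_pow, sq μ, mul_assoc]
    gcongr
    exact hμ.trans hμbar
  calc (1 + c * μ) * δ θ - μ * (M + L / 2 * μbar * G ^ 2)
      = δ θ + μ * (c * δ θ - M) - L / 2 * (μ * (μbar * G ^ 2)) := by ring
    _ ≤ δ θ + ⟪grad θ, μ • g⟫ - L / 2 * ‖μ • g‖ ^ 2 := by gcongr
    _ ≤ δ (θ + μ • g) := hL.le_apply_add θ (μ • g)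

end QuadraticRemainderBound

theorem compounding_discrepancy_general
    (d : ℕ) (δ : EuclideanSpace ℝ (Fin d) → ℝ)
    (grad : EuclideanSpace ℝ (Fin d) → EuclideanSpace ℝ (Fin d))
    (L c M G μ μbar : ℝ)
    (hL : ∀ θ Δ : EuclideanSpace ℝ (Fin d),
      |δ (θ + Δ) - δ θ - inner ℝ (grad θ) Δ| ≤ L / 2 * ‖Δ‖ ^ 2)
    (θ g gs b : EuclideanSpace ℝ (Fin d))
    (hg : g = gs + b)
    (hc : 0 < c)
    (hbias : inner ℝ (grad θ) b ≥ c * δ θ)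
    (hstar : |(inner ℝ (grad θ) gs : ℝ)| ≤ M)
    (hgnorm : ‖g‖ ≤ G)
    (hμ : 0 < μ) (hμbar : μ ≤ μbar)
    (hbig : δ θ ≥ 2 * (M + L / 2 * μbar * G ^ 2) / c) :
    δ (θ + μ • g) ≥ (1 + c / 2 * μ) * δ θ := by
  have hL : QuadraticRemainderBound δ grad L := hL
  rcases subsingleton_or_nontrivial (EuclideanSpace ℝ (Fin d)) with hE | hE
  · have hδ : δ θ ≤ 0 := by
      rw [Subsingleton.elim b 0, inner_zero_right] at hbias
      exact nonpos_of_mul_nonpos_right hbias hc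
    rw [Subsingleton.elim (θ + μ • g) θ]
    nlinarith [mul_nonneg hc.le hμ.le]
  · have hstep := hL.one_step_lower_bound hL.nonneg hg hbias hstar hgnorm hμ.le hμbar
    have hκ : M + L / 2 * μbar * G ^ 2 ≤ c / 2 * δ θ := by
      rw [ge_iff_le, div_le_iff₀ hc] at hbig
      linarith
    linarith [mul_le_mul_of_nonneg_left hκ hμ.le]

theorem compounding_discrepancy
    (d : ℕ) (δ : EuclideanSpace ℝ (Fin d) → ℝ)
    (grad : EuclideanSpace ℝ (Fin d) → EuclideanSpace ℝ (Fin d))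
    (L c M G μ μbar : ℝ)
    (hL : ∀ θ Δ : EuclideanSpace ℝ (Fin d),
      |δ (θ + Δ) - δ θ - inner ℝ (grad θ) Δ| ≤ L / 2 * ‖Δ‖ ^ 2)
    (θ g gs b : EuclideanSpace ℝ (Fin d))
    (hg : g = gs + b)
    (hc : 0 < c)
    (hM : 0 ≤ M) (hG : 0 ≤ G)
    (hbias : inner ℝ (grad θ) b ≥ c * δ θ)
    (hstar : |(inner ℝ (grad θ) gs : ℝ)| ≤ M)
    (hgnorm : ‖g‖ ≤ G)
    (hμ : 0 < μ) (hμbar : μ ≤ μbar)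
    (hbig : δ θ ≥ 2 * (M + L / 2 * μbar * G ^ 2) / c) :
    δ (θ + μ • g) ≥ (1 + c / 2 * μ) * δ θ :=
  compounding_discrepancy_general d δ grad L c M G μ μbar hL θ g gs b hg hc hbias hstar hgnorm hμ
    hμbar hbig
end

section
/- For n ≥ 3 and 0 ≤ m ≤ n, the maximum number of points of P_n covered by m lines each of which is horizontal (y = c), vertical (x = d), or antidiagonal (x + y = e) equals m(2n − m + 1)/2: taking the lines x + y = n+1, n, …, n+2−m covers m(2n − m + 1)/2 points, and no choice of m such lines covers more. -/
structure Line where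
  a : ℝ
  b : ℝ
  c : ℝ
  nontriv : a ≠ 0 ∨ b ≠ 0

def Line.toSet (L : Line) : Set (ℝ × ℝ) := {p | L.a * p.1 + L.b * p.2 + L.c = 0}

/-- A line is sunny if it is not parallel to the x-axis (`a ≠ 0`), not parallel to the
y-axis (`b ≠ 0`), and not parallel to the line `x + y = 0` (`a ≠ b`). -/
def Line.Sunny (L : Line) : Prop := L.a ≠ 0 ∧ L.b ≠ 0 ∧ L.a ≠ L.b

/-- The triangular grid `P n` of points `(a, b)` with `a, b ≥ 1` integers and `a + b ≤ n + 1`,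
viewed in the real plane. -/
def triGrid (n : ℕ) : Set (ℝ × ℝ) :=
  {p | ∃ a b : ℤ, 1 ≤ a ∧ 1 ≤ b ∧ a + b ≤ (n : ℤ) + 1 ∧ p = ((a : ℝ), (b : ℝ))}

open Finset

noncomputable def intGrid (n : ℕ) : Finset (ℤ × ℤ) :=
  ((Finset.Icc 1 (n:ℤ)) ×ˢ (Finset.Icc 1 (n:ℤ))).filter (fun q => q.1 + q.2 ≤ (n:ℤ) + 1)

lemma mem_intGrid {n : ℕ} {q : ℤ × ℤ} :
    q ∈ intGrid n ↔ 1 ≤ q.1 ∧ 1 ≤ q.2 ∧ q.1 + q.2 ≤ (n:ℤ) + 1 := by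
  simp only [intGrid, mem_filter, mem_product, Finset.mem_Icc]
  constructor
  · rintro ⟨⟨⟨h1,h2⟩,⟨h3,h4⟩⟩,h5⟩; exact ⟨h1,h3,h5⟩
  · rintro ⟨h1,h3,h5⟩; refine ⟨⟨⟨h1,?_⟩,⟨h3,?_⟩⟩,h5⟩ <;> omega

def onL (L : Line) (q : ℤ × ℤ) : Prop :=
  L.a * (q.1:ℝ) + L.b * (q.2:ℝ) + L.c = 0

noncomputable def covered (n : ℕ) {m : ℕ} (ℓ : Fin m → Line) : Finset (ℤ × ℤ) := by
  classical
  exact (intGrid n).filter (fun q => ∃ i, onL (ℓ i) q)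

def emb : ℤ × ℤ → ℝ × ℝ := fun q => ((q.1 : ℝ), (q.2 : ℝ))

lemma emb_inj : Function.Injective emb := by
  rintro ⟨a,b⟩ ⟨c,d⟩ h
  simp only [emb, Prod.mk.injEq] at h
  exact Prod.ext (by exact_mod_cast h.1) (by exact_mod_cast h.2)

lemma covered_eq (n : ℕ) {m : ℕ} (ℓ : Fin m → Line) :
    {p ∈ triGrid n | ∃ i, p ∈ (ℓ i).toSet} = emb '' (covered n ℓ : Finset (ℤ × ℤ)) := by
  classical
  ext p
  simp only [Set.mem_image, Finset.mem_coe, covered, Finset.mem_filter]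
  simp only [Set.mem_setOf_eq, Set.mem_image, covered, coe_filter, triGrid, Line.toSet,
    Set.mem_setOf_eq, onL]
  constructor
  · rintro ⟨⟨a, b, h1, h2, h3, rfl⟩, i, hi⟩
    exact ⟨(a,b), ⟨mem_intGrid.mpr ⟨h1,h2,h3⟩, i, hi⟩, rfl⟩
  · rintro ⟨⟨a,b⟩, ⟨hq, i, hi⟩, rfl⟩
    rw [mem_intGrid] at hq
    exact ⟨⟨a, b, hq.1, hq.2.1, hq.2.2, rfl⟩, i, hi⟩

lemma ncard_covered (n : ℕ) {m : ℕ} (ℓ : Fin m → Line) :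
    Set.ncard {p ∈ triGrid n | ∃ i, p ∈ (ℓ i).toSet} = (covered n ℓ).card := by
  rw [covered_eq, Set.ncard_image_of_injective _ emb_inj, Set.ncard_coe_finset]

lemma fib_card (n : ℕ) (s : ℤ) (hs' : s ≤ (n:ℤ)+1) :
    ((intGrid n).filter (fun q => q.1 + q.2 = s)).card = (s-1).toNat := by
  rcases le_or_gt 2 s with h2 | h2
  · have : (intGrid n).filter (fun q => q.1 + q.2 = s)
        = (Finset.Icc 1 (s-1)).image (fun x => (x, s-x)) := by
      ext ⟨a,b⟩
      simp only [mem_filter, mem_intGrid, mem_image, Finset.mem_Icc, Prod.mk.injEq]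
      constructor
      · rintro ⟨⟨h1,h2,h3⟩,h4⟩; exact ⟨a, ⟨h1, by omega⟩, rfl, by omega⟩
      · rintro ⟨x, ⟨h1,h2⟩, rfl, rfl⟩; refine ⟨⟨h1, by omega, by omega⟩, by ring⟩
    rw [this, Finset.card_image_of_injective _
      (by intro x y h; simpa using (Prod.mk.injEq _ _ _ _ ▸ h).1), Int.card_Icc]
    congr 1; omega
  · have : (intGrid n).filter (fun q => q.1 + q.2 = s) = ∅ := by
      rw [Finset.filter_eq_empty_iff]
      intro q hq
      have := mem_intGrid.mp hq; omega
    rw [this]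
    simp only [Finset.card_empty]
    omega

lemma card_fiberwise {n : ℕ} (T : Finset (ℤ × ℤ)) (hT : T ⊆ intGrid n) :
    T.card = ∑ s ∈ Finset.Icc (2:ℤ) ((n:ℤ)+1), (T.filter (fun q => q.1 + q.2 = s)).card := by
  classical
  apply Finset.card_eq_sum_card_fiberwise
  intro q hq
  have := mem_intGrid.mp (hT hq)
  simp only [Finset.mem_coe, Finset.mem_Icc]; omega

lemma fib_le {n : ℕ} (T : Finset (ℤ × ℤ)) (hT : T ⊆ intGrid n) (s : ℤ) (hs : s ≤ (n:ℤ)+1) :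
    (T.filter (fun q => q.1 + q.2 = s)).card ≤ (s-1).toNat := by
  classical
  rw [← fib_card n s hs]
  exact Finset.card_le_card (Finset.filter_subset_filter _ hT)

lemma sum_Icc_reindex (f : ℕ → ℕ) (a b : ℤ) (ha : 2 ≤ a) (hab : a ≤ b + 1) :
    ∑ s ∈ Finset.Icc a b, f (s-1).toNat
      = ∑ j ∈ Finset.Icc ((a-1).toNat) ((b-1).toNat), f j := by
  rcases le_or_gt a b with h | h
  · have hmap := Finset.sum_map (Finset.Icc ((a-1).toNat) ((b-1).toNat))
      ⟨fun j : ℕ => (j:ℤ) + 1, by intro x y hxy; simp at hxy; exact hxy⟩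
      (fun s => f (s-1).toNat)
    rw [show Finset.Icc a b = (Finset.Icc ((a-1).toNat) ((b-1).toNat)).map
      ⟨fun j : ℕ => (j:ℤ) + 1, by intro x y hxy; simp at hxy; exact hxy⟩ from ?_, hmap]
    · apply Finset.sum_congr rfl; intro j hj; show f (((j:ℤ)+1-1).toNat) = f j; simp
    · ext s; simp only [Finset.mem_Icc, Finset.mem_map, Function.Embedding.coeFn_mk,
        Finset.mem_Icc]
      constructor
      · intro hs; exact ⟨(s-1).toNat, ⟨by omega, by omega⟩, by show (((s-1).toNat : ℕ) : ℤ) + 1 = s; omega⟩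
      · rintro ⟨j, ⟨h1,h2⟩, rfl⟩; show a ≤ (j:ℤ)+1 ∧ (j:ℤ)+1 ≤ b; omega
  · have : a = b + 1 := by omega
    subst this
    rw [Finset.Icc_eq_empty (by omega), Finset.Icc_eq_empty (by omega)]
    simp

lemma gauss (a b : ℕ) (h : a ≤ b + 1) :
    2 * ∑ j ∈ Finset.Icc a b, j = (b + 1 - a) * (a + b) := by
  induction b with
  | zero => interval_cases a <;> simp
  | succ b ih =>
    rcases Nat.lt_or_ge a (b+2) with h' | h'
    · rw [Finset.sum_Icc_succ_top (by omega)]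
      rcases Nat.lt_or_ge a (b+1) with h'' | h''
      · have key := ih (by omega)
        obtain ⟨d, rfl⟩ := Nat.exists_eq_add_of_le (show a ≤ b by omega)
        have e1 : a + d + 1 - a = d + 1 := by omega
        have e2 : a + d + 1 + 1 - a = d + 2 := by omega
        rw [e1] at key
        rw [e2]
        nlinarith [key]
      · have : a = b + 1 := by omega
        subst this; simp; ring
    · have : a = b + 2 := by omega
      subst this
      rw [Finset.Icc_eq_empty (by omega)]
      have : b + 1 + 1 - (b + 2) = 0 := by omega
      rw [this]; simp

lemma topk : ∀ (k : ℕ) (K : Finset ℤ) (f : ℤ → ℕ), Monotone f → ∀ (b : ℤ),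
    (∀ s ∈ K, s ≤ b) → K.card ≤ k → ∑ s ∈ K, f s ≤ ∑ i ∈ Finset.range k, f (b - i) := by
  intro k
  induction k with
  | zero =>
    intro K f hf b hb hk
    simp only [Nat.le_zero, Finset.card_eq_zero] at hk
    subst hk; simp
  | succ k ih =>
    intro K f hf b hb hk
    rcases K.eq_empty_or_nonempty with rfl | hne
    · simp
    · set M := K.max' hne with hM
      have hMK : M ∈ K := K.max'_mem hne
      rw [← Finset.add_sum_erase _ _ hMK]
      rw [Finset.sum_range_succ']
      have h1 : f M ≤ f (b - 0) := by
        apply hf; simpa using hb M hMK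
      have h2 : ∑ s ∈ K.erase M, f s ≤ ∑ i ∈ Finset.range k, f (b - (i + 1)) := by
        have hih := ih (K.erase M) (fun s => f (s)) hf (b - 1) ?_ ?_
        · refine hih.trans (le_of_eq ?_)
          apply Finset.sum_congr rfl
          intro i _; congr 1; push_cast; ring
        · intro s hs
          have h3 := Finset.mem_erase.mp hs
          have h4 := K.le_max' s h3.2
          have h5 := hb M hMK
          have : s < M := lt_of_le_of_ne h4 h3.1
          omega
        · have := Finset.card_erase_of_mem hMK
          omega
      push_cast
      omega

lemma sumMin (t N : ℕ) (h : t ≤ N) :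
    2 * ∑ j ∈ Finset.Icc 1 N, min j t = t * (t + 1) + 2 * ((N - t) * t) := by
  induction N with
  | zero =>
    have : t = 0 := by omega
    subst this; simp
  | succ N ihN =>
    rcases Nat.lt_or_ge N t with h' | h'
    · have ht : t = N + 1 := by omega
      subst ht
      have hmin : ∀ j ∈ Finset.Icc 1 (N+1), min j (N+1) = j := by
        intro j hj; simp only [Finset.mem_Icc] at hj; omega
      rw [Finset.sum_congr rfl hmin]
      have hg := gauss 1 (N+1) (by omega)
      simp only [Nat.add_sub_cancel] at hg ⊢
      rw [hg]
      have e : N + 1 - (N + 1) = 0 := by omega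
      rw [e]
      ring
    · have key := ihN h'
      rw [Finset.sum_Icc_succ_top (by omega : 1 ≤ N + 1)]
      have hmin : min (N+1) t = t := by omega
      rw [hmin]
      obtain ⟨d, rfl⟩ := Nat.exists_eq_add_of_le h'
      have e1 : t + d - t = d := by omega
      have e2 : t + d + 1 - t = d + 1 := by omega
      rw [e1] at key; rw [e2]
      have expand : (d + 1) * t = d * t + t := by ring
      omega

lemma sumDesc (c k : ℕ) (h : k ≤ c) :
    2 * ∑ i ∈ Finset.range k, (c - i) = k * (2 * c - k + 1) := by
  induction k with
  | zero => simp
  | succ k ih =>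
    have key := ih (by omega)
    rw [Finset.sum_range_succ]
    obtain ⟨d, rfl⟩ := Nat.exists_eq_add_of_le h
    have e1 : k + 1 + d - k = d + 1 := by omega
    have e2 : 2 * (k + 1 + d) - k + 1 = k + 2 * d + 3 := by omega
    have e3 : 2 * (k + 1 + d) - (k + 1) + 1 = k + 2 * d + 2 := by omega
    rw [e2] at key
    rw [e1, e3]
    have expand : (k + 1) * (k + 2 * d + 2) = k * (k + 2 * d + 3) + 2 * d + 2 := by ring
    omega

lemma upper_bound (n m : ℕ) (hm : m ≤ n) (ℓ : Fin m → Line)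
    (hns : ∀ i, ¬ (ℓ i).Sunny) :
    (covered n ℓ).card ≤ m * (2 * n - m + 1) / 2 := by
  classical
  rcases Nat.eq_zero_or_pos m with rfl | hm0
  · have : covered n ℓ = ∅ := by
      rw [covered, Finset.filter_eq_empty_iff]
      rintro q - ⟨i, -⟩
      exact absurd i.2 (by omega)
    simp [this]
  have hne : Nonempty (Fin m) := ⟨⟨0, hm0⟩⟩
  set C := covered n ℓ with hC
  have hCsub : C ⊆ intGrid n := Finset.filter_subset _ _
  set J := Finset.univ.filter (fun i : Fin m => (ℓ i).a = (ℓ i).b) with hJ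
  set k := J.card with hk
  set t := (Finset.univ.filter (fun i : Fin m => ¬ ((ℓ i).a = (ℓ i).b))).card with ht
  have hkt : k + t = m := by
    rw [hk, ht, Finset.card_filter_add_card_filter_not]
    simp
  -- dichotomy
  have hdichot : ∀ i, (ℓ i).a = (ℓ i).b ∨ ((ℓ i).a = 0 ∨ (ℓ i).b = 0) := by
    intro i
    by_contra hcon
    push_neg at hcon
    exact hns i ⟨hcon.2.1, hcon.2.2, hcon.1⟩
  have hdiag_ne : ∀ i, (ℓ i).a = (ℓ i).b → (ℓ i).a ≠ 0 := by
    intro i hab h0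
    rcases (ℓ i).nontriv with h | h
    · exact h h0
    · exact h (hab ▸ h0)
  -- uniqueness on a diagonal for non-diagonal lines
  have huniq : ∀ i, (ℓ i).a ≠ (ℓ i).b → ∀ q q' : ℤ × ℤ, onL (ℓ i) q → onL (ℓ i) q' →
      q.1 + q.2 = q'.1 + q'.2 → q = q' := by
    intro i hab q q' hq hq' hsum
    rcases hdichot i with h | h | h
    · exact absurd h hab
    · -- horizontal : a = 0, b ≠ 0
      have hb : (ℓ i).b ≠ 0 := by
        rcases (ℓ i).nontriv with h' | h'
        · exact absurd h h'
        · exact h'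
      rw [onL, h, zero_mul, zero_add] at hq hq'
      have : (ℓ i).b * (q.2:ℝ) = (ℓ i).b * (q'.2:ℝ) := by linarith
      have h2 : (q.2:ℝ) = (q'.2:ℝ) := mul_left_cancel₀ hb this
      have h2' : q.2 = q'.2 := by exact_mod_cast h2
      have h1' : q.1 = q'.1 := by omega
      exact Prod.ext h1' h2'
    · -- vertical : b = 0, a ≠ 0
      have ha : (ℓ i).a ≠ 0 := by
        rcases (ℓ i).nontriv with h' | h'
        · exact h'
        · exact absurd h h'
      rw [onL, h, zero_mul, add_zero] at hq hq'
      have : (ℓ i).a * (q.1:ℝ) = (ℓ i).a * (q'.1:ℝ) := by linarith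
      have h1 : (q.1:ℝ) = (q'.1:ℝ) := mul_left_cancel₀ ha this
      have h1' : q.1 = q'.1 := by exact_mod_cast h1
      have h2' : q.2 = q'.2 := by omega
      exact Prod.ext h1' h2'
  set K := (Finset.Icc (2:ℤ) ((n:ℤ)+1)).filter
    (fun s : ℤ => ∃ i, (ℓ i).a = (ℓ i).b ∧ (ℓ i).a * ((s:ℤ):ℝ) + (ℓ i).c = 0) with hKdef
  have hKsub : K ⊆ Finset.Icc (2:ℤ) ((n:ℤ)+1) := Finset.filter_subset _ _
  -- |K| ≤ k
  have hKk : K.card ≤ k := by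
    have := Finset.card_le_card_of_injOn
      (f := fun s : ℤ => if h : ∃ i, (ℓ i).a = (ℓ i).b ∧ (ℓ i).a * (s:ℝ) + (ℓ i).c = 0
        then h.choose else Classical.arbitrary (Fin m))
      (s := K) (t := J) ?_ ?_
    · exact this
    · intro s hs
      have hP := (Finset.mem_filter.mp hs).2
      beta_reduce
      rw [dif_pos hP]
      simp only [hJ, Finset.mem_coe, Finset.mem_filter, Finset.mem_univ, true_and]
      exact hP.choose_spec.1
    · intro s hs s' hs' heq
      have hP := (Finset.mem_filter.mp hs).2
      have hP' := (Finset.mem_filter.mp hs').2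
      beta_reduce at heq
      rw [dif_pos hP, dif_pos hP'] at heq
      have c1 := hP.choose_spec
      have c2 := hP'.choose_spec
      rw [heq] at c1
      have ha := hdiag_ne _ c2.1
      have hcast : (s:ℝ) = (s':ℝ) := by
        have e1 := c1.2; have e2 := c2.2
        apply mul_left_cancel₀ ha
        linarith
      exact_mod_cast hcast
  -- fibers
  set D := fun s : ℤ => C.filter (fun q => q.1 + q.2 = s) with hD
  have hD2 : ∀ s ∈ Finset.Icc (2:ℤ) ((n:ℤ)+1), s ∉ K → (D s).card ≤ t := by
    intro s hsIcc hsK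
    apply Finset.card_le_card_of_injOn
      (f := fun q : ℤ × ℤ => if h : ∃ i, onL (ℓ i) q
        then h.choose else Classical.arbitrary (Fin m))
    · intro q hq
      have hqC : q ∈ C := (Finset.mem_filter.mp hq).1
      have hqs : q.1 + q.2 = s := (Finset.mem_filter.mp hq).2
      have hP : ∃ i, onL (ℓ i) q := (Finset.mem_filter.mp hqC).2
      beta_reduce
      rw [dif_pos hP]
      simp only [Finset.mem_coe, Finset.mem_filter, Finset.mem_univ, true_and]
      intro hab
      apply hsK
      rw [hKdef, Finset.mem_filter]
      refine ⟨hsIcc, hP.choose, hab, ?_⟩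
      have hon := hP.choose_spec
      rw [onL] at hon
      have : (ℓ hP.choose).a * ((q.1:ℝ) + (q.2:ℝ)) + (ℓ hP.choose).c = 0 := by
        rw [hab] at hon ⊢
        ring_nf
        ring_nf at hon
        linarith
      have hcast : ((q.1:ℝ) + (q.2:ℝ)) = (s:ℝ) := by exact_mod_cast congrArg (Int.cast : ℤ → ℝ) hqs
      rw [hcast] at this
      exact this
    · intro q hq q' hq' heq
      have hqC : q ∈ C := (Finset.mem_filter.mp hq).1
      have hq'C : q' ∈ C := (Finset.mem_filter.mp hq').1
      have hqs : q.1 + q.2 = s := (Finset.mem_filter.mp hq).2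
      have hq's : q'.1 + q'.2 = s := (Finset.mem_filter.mp hq').2
      have hP : ∃ i, onL (ℓ i) q := (Finset.mem_filter.mp hqC).2
      have hP' : ∃ i, onL (ℓ i) q' := (Finset.mem_filter.mp hq'C).2
      beta_reduce at heq
      rw [dif_pos hP, dif_pos hP'] at heq
      have c1 := hP.choose_spec
      have c2 := hP'.choose_spec
      rw [heq] at c1
      by_cases hab : (ℓ hP'.choose).a = (ℓ hP'.choose).b
      · -- then s ∈ K, contradiction
        exfalso
        apply hsK
        rw [hKdef, Finset.mem_filter]
        refine ⟨hsIcc, hP'.choose, hab, ?_⟩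
        have hon := c2
        rw [onL] at hon
        have : (ℓ hP'.choose).a * ((q'.1:ℝ) + (q'.2:ℝ)) + (ℓ hP'.choose).c = 0 := by
          rw [hab] at hon ⊢
          ring_nf
          ring_nf at hon
          linarith
        have hcast : ((q'.1:ℝ) + (q'.2:ℝ)) = (s:ℝ) := by
          exact_mod_cast congrArg (Int.cast : ℤ → ℝ) hq's
        rw [hcast] at this
        exact this
      · exact huniq _ hab q q' c1 c2 (by omega)
  -- main sum bound
  have hkey : ∀ s ∈ Finset.Icc (2:ℤ) ((n:ℤ)+1),
      (D s).card ≤ min ((s-1).toNat) t + (if s ∈ K then (s-1).toNat - t else 0) := by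
    intro s hs
    simp only [Finset.mem_Icc] at hs
    by_cases hsK : s ∈ K
    · rw [if_pos hsK]
      have hle : (D s).card ≤ (s-1).toNat := fib_le C hCsub s (by omega)
      rcases Nat.le_total ((s-1).toNat) t with h' | h'
      · rw [Nat.min_eq_left h']; omega
      · rw [Nat.min_eq_right h']; omega
    · rw [if_neg hsK]
      simp only [add_zero]
      have h1 : (D s).card ≤ (s-1).toNat := fib_le C hCsub s (by omega)
      have h2 := hD2 s (by simp only [Finset.mem_Icc]; omega) hsK
      exact le_min h1 h2
  have hsplit : C.card ≤ (∑ s ∈ Finset.Icc (2:ℤ) ((n:ℤ)+1), min ((s-1).toNat) t)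
      + ∑ s ∈ K, ((s-1).toNat - t) := by
    rw [card_fiberwise C hCsub]
    calc ∑ s ∈ Finset.Icc (2:ℤ) ((n:ℤ)+1), (C.filter (fun q => q.1+q.2 = s)).card
        ≤ ∑ s ∈ Finset.Icc (2:ℤ) ((n:ℤ)+1),
          (min ((s-1).toNat) t + (if s ∈ K then (s-1).toNat - t else 0)) :=
          Finset.sum_le_sum hkey
      _ = (∑ s ∈ Finset.Icc (2:ℤ) ((n:ℤ)+1), min ((s-1).toNat) t)
          + ∑ s ∈ Finset.Icc (2:ℤ) ((n:ℤ)+1), (if s ∈ K then (s-1).toNat - t else 0) := by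
          rw [Finset.sum_add_distrib]
      _ = _ := by
          congr 1
          rw [Finset.sum_ite_mem, Finset.inter_eq_right.mpr hKsub]
  -- bound the two sums
  have htn : t ≤ n := by omega
  have hkn : k ≤ n - t := by omega
  have hA : ∑ s ∈ Finset.Icc (2:ℤ) ((n:ℤ)+1), min ((s-1).toNat) t
      = ∑ j ∈ Finset.Icc 1 n, min j t := by
    have hre := sum_Icc_reindex (fun j => min j t) 2 ((n:ℤ)+1) (by omega) (by omega)
    rw [hre]
    have e1 : ((2:ℤ)-1).toNat = 1 := by norm_num
    have e2 : ((n:ℤ)+1-1).toNat = n := by omega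
    rw [e1, e2]
  have hB : ∑ s ∈ K, ((s-1).toNat - t) ≤ ∑ i ∈ Finset.range k, ((n - t) - i) := by
    have hmono : Monotone (fun s : ℤ => (s-1).toNat - t) := by
      intro x y hxy
      simp only
      have : (x-1).toNat ≤ (y-1).toNat := by omega
      omega
    have := topk k K (fun s => (s-1).toNat - t) hmono ((n:ℤ)+1)
      (fun s hs => (Finset.mem_Icc.mp (hKsub hs)).2) hKk
    refine this.trans (le_of_eq ?_)
    apply Finset.sum_congr rfl
    intro i hi
    simp only [Finset.mem_range] at hi
    show ((n:ℤ) + 1 - (i:ℤ) - 1).toNat - t = n - t - i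
    omega
  have h2A := sumMin t n htn
  have h2B := sumDesc (n - t) k hkn
  have hfinal : (∑ j ∈ Finset.Icc 1 n, min j t) + (∑ i ∈ Finset.range k, ((n - t) - i))
      ≤ m * (2 * n - m + 1) / 2 := by
    rw [Nat.le_div_iff_mul_le (by norm_num : 0 < 2)]
    obtain ⟨u, hu⟩ := Nat.exists_eq_add_of_le htn
    obtain ⟨v, hv⟩ := Nat.exists_eq_add_of_le hkn
    have hnt : n - t = u := by omega
    rw [hnt] at h2A h2B hv ⊢
    have hm' : m = k + t := by omega
    rw [hm']
    have e1 : 2 * n - (k + t) + 1 = t + k + 2 * v + 1 := by omega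
    have e2 : 2 * u - k + 1 = k + 2 * v + 1 := by omega
    rw [e2] at h2B
    rw [e1]
    subst hv
    have expand : (k + t) * (t + k + 2 * v + 1)
        = t * (t + 1) + 2 * ((k + v) * t) + k * (k + 2 * v + 1) := by ring
    omega
  refine le_trans hsplit ?_
  rw [hA]
  exact le_trans (Nat.add_le_add_left hB _) hfinal

lemma sum_Icc_toNat (a b : ℤ) (ha : 2 ≤ a) (hab : a ≤ b + 1) :
    ∑ s ∈ Finset.Icc a b, (s-1).toNat
      = ∑ j ∈ Finset.Icc ((a-1).toNat) ((b-1).toNat), j :=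
  sum_Icc_reindex (fun j => j) a b ha hab

lemma construction_card (n m : ℕ) (hn : 3 ≤ n) (hm : m ≤ n) :
    ((intGrid n).filter (fun q => (n:ℤ) + 2 - m ≤ q.1 + q.2)).card
      = m * (2 * n - m + 1) / 2 := by
  classical
  set T := (intGrid n).filter (fun q => (n:ℤ) + 2 - m ≤ q.1 + q.2) with hT
  have hcard : T.card = ∑ s ∈ Finset.Icc ((n:ℤ)+2-m) ((n:ℤ)+1),
      (T.filter (fun q => q.1 + q.2 = s)).card := by
    apply Finset.card_eq_sum_card_fiberwise
    intro q hq
    simp only [hT, Finset.mem_coe, mem_filter, mem_intGrid] at hq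
    simp only [Finset.mem_coe, Finset.mem_Icc]; omega
  have hfib : ∀ s ∈ Finset.Icc ((n:ℤ)+2-m) ((n:ℤ)+1),
      (T.filter (fun q => q.1 + q.2 = s)).card = (s-1).toNat := by
    intro s hs
    simp only [Finset.mem_Icc] at hs
    have heq : T.filter (fun q => q.1 + q.2 = s)
        = (intGrid n).filter (fun q => q.1 + q.2 = s) := by
      ext q
      simp only [hT, mem_filter, and_assoc]
      constructor
      · rintro ⟨h1, h2, h3⟩; exact ⟨h1, h3⟩
      · rintro ⟨h1, h3⟩; exact ⟨h1, by omega, h3⟩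
    rw [heq]
    exact fib_card n s (by omega)
  rw [hcard, Finset.sum_congr rfl hfib, sum_Icc_toNat _ _ (by omega) (by omega)]
  have e1 : ((n:ℤ)+2-m-1).toNat = n + 1 - m := by omega
  have e2 : ((n:ℤ)+1-1).toNat = n := by omega
  rw [e1, e2]
  have hg := gauss (n+1-m) n (by omega)
  symm
  apply Nat.div_eq_of_eq_mul_left (by norm_num)
  have e3 : n + 1 - (n + 1 - m) = m := by omega
  have e4 : n + 1 - m + n = 2 * n - m + 1 := by omega
  rw [e3, e4] at hg
  omega

noncomputable def consLines (n m : ℕ) : Fin m → Line :=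
  fun i => ⟨1, 1, -((n:ℝ) + 1 - (i:ℕ)), Or.inl one_ne_zero⟩

lemma consLines_not_sunny (n m : ℕ) (i : Fin m) : ¬ (consLines n m i).Sunny := by
  rintro ⟨-, -, h⟩
  exact h rfl

lemma covered_consLines (n m : ℕ) (hm : m ≤ n) :
    covered n (consLines n m)
      = (intGrid n).filter (fun q => (n:ℤ) + 2 - m ≤ q.1 + q.2) := by
  classical
  ext q
  simp only [covered, Finset.mem_filter]
  simp only [consLines, onL]
  constructor
  · rintro ⟨hq, i, hi⟩
    refine ⟨hq, ?_⟩
    simp only [one_mul] at hi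
    have hint : q.1 + q.2 = (n:ℤ) + 1 - (i:ℕ) := by
      have : (q.1:ℝ) + (q.2:ℝ) = (n:ℝ) + 1 - ((i:ℕ):ℝ) := by linarith
      exact_mod_cast this
    have := i.2
    omega
  · rintro ⟨hq, hle⟩
    have hgrid := mem_intGrid.mp hq
    refine ⟨hq, ⟨((n:ℤ)+1-(q.1+q.2)).toNat, by omega⟩, ?_⟩
    simp only [one_mul]
    have hint : q.1 + q.2 + (((n:ℤ)+1-(q.1+q.2)).toNat : ℤ) = (n:ℤ) + 1 := by omega
    have : ((q.1 + q.2 + (((n:ℤ)+1-(q.1+q.2)).toNat : ℤ) : ℤ) : ℝ) = ((n:ℤ) + 1 : ℤ) := by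
      exact_mod_cast congrArg (Int.cast : ℤ → ℝ) hint
    push_cast at this
    push_cast
    linarith

theorem nonsunny_max_coverage (n m : ℕ) (hn : 3 ≤ n) (hm : m ≤ n) :
    (∀ ℓ : Fin m → Line, (∀ i, ¬ (ℓ i).Sunny) →
      Set.ncard {p ∈ triGrid n | ∃ i, p ∈ (ℓ i).toSet} ≤ m * (2 * n - m + 1) / 2) ∧
    (∃ ℓ : Fin m → Line, (∀ i, ¬ (ℓ i).Sunny) ∧
      Set.ncard {p ∈ triGrid n | ∃ i, p ∈ (ℓ i).toSet} = m * (2 * n - m + 1) / 2) := by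
  constructor
  · intro ℓ hns
    rw [ncard_covered]
    exact upper_bound n m hm ℓ hns
  · refine ⟨consLines n m, consLines_not_sunny n m, ?_⟩
    rw [ncard_covered, covered_consLines n m hm]
    exact construction_card n m hn hm
end

section
/- For every integer k ≥ 1, any line in the plane that is not horizontal, not vertical, and not of slope −1 contains at most ⌈k/2⌉ = ⌊(k+1)/2⌋ points of the triangular grid P_k = {(a,b) ∈ ℤ⁺ × ℤ⁺ : a + b ≤ k+1}. -/
lemma aux_card (k : ℕ) (S : Set (ℝ × ℝ)) (u : ℝ × ℝ → ℝ)
    (hrange : ∀ p ∈ S, ∃ m : ℤ, u p = m ∧ 1 ≤ m ∧ m ≤ (k : ℤ))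
    (hgap : ∀ p ∈ S, ∀ q ∈ S, p ≠ q → (2:ℝ) ≤ |u p - u q|) :
    S.ncard ≤ (k + 1) / 2 := by
  classical
  set n : ℤ := (((k + 1) / 2 : ℕ) : ℤ) with hn
  have hkn : (k : ℤ) ≤ 2 * n := by
    have h : k ≤ 2 * ((k+1)/2) := by omega
    rw [hn]; exact_mod_cast h
  have h1 : S.ncard ≤ (Set.Icc (1:ℤ) n).ncard := by
    apply Set.ncard_le_ncard_of_injOn (fun p => ⌈u p / 2⌉)
    · intro p hp
      obtain ⟨m, hm, hm1, hmk⟩ := hrange p hp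
      simp only [Set.mem_Icc]
      constructor
      · rw [Int.le_ceil_iff]
        rw [hm]
        push_cast
        have : (1:ℝ) ≤ m := by exact_mod_cast hm1
        linarith
      · rw [Int.ceil_le, hm]
        have h2 : (m:ℝ) ≤ 2 * n := by exact_mod_cast hmk.trans hkn
        linarith
    · intro p hp q hq hpq
      by_contra hne
      have hg := hgap p hp q hq hne
      have h1 := Int.le_ceil (u p / 2)
      have h2 := Int.ceil_lt_add_one (u p / 2)
      have h3 := Int.le_ceil (u q / 2)
      have h4 := Int.ceil_lt_add_one (u q / 2)
      simp only at hpq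
      rw [hpq] at h1 h2
      have habs : |u p - u q| < 2 := by
        rw [abs_sub_lt_iff]; constructor <;> linarith
      linarith [hg]
  have h2 : (Set.Icc (1:ℤ) n).ncard = n.toNat := by
    rw [← Finset.coe_Icc, Set.ncard_coe_finset, Int.card_Icc]
    simp
  rw [h2] at h1
  omega

lemma aux_abs (x : ℤ) (h : x ≤ -2 ∨ 2 ≤ x) : (2:ℝ) ≤ |(x:ℝ)| := by
  rcases h with h | h
  · apply le_abs.mpr (Or.inr _)
    have : (x:ℝ) ≤ -2 := by exact_mod_cast h
    linarith
  · exact le_abs.mpr (Or.inl (by exact_mod_cast h))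

lemma aux_abs_one (x : ℤ) (h : x = 1 ∨ x = -1) : |(x:ℝ)| = 1 := by
  rcases h with h | h <;> rw [h] <;> simp

theorem sunny_line_max_points (k : ℕ) (hk : 1 ≤ k) (L : Line) (hL : L.Sunny) :
    Set.ncard {p ∈ triGrid k | p ∈ L.toSet} ≤ (k + 1) / 2 := by
  obtain ⟨ha, hb, hab⟩ := hL
  set S := {p ∈ triGrid k | p ∈ L.toSet} with hS
  have hmem : ∀ p ∈ S, ∃ a b : ℤ, 1 ≤ a ∧ 1 ≤ b ∧ a + b ≤ (k:ℤ) + 1 ∧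
      p = ((a:ℝ), (b:ℝ)) ∧ L.a * (a:ℝ) + L.b * (b:ℝ) + L.c = 0 := by
    rintro p ⟨⟨a, b, h1, h2, h3, rfl⟩, hline⟩
    exact ⟨a, b, h1, h2, h3, rfl, hline⟩
  rcases lt_trichotomy |L.a| |L.b| with hc | hc | hc
  · -- |L.a| < |L.b| : use u = fst, gap 2 in first coordinate
    apply aux_card k S (fun p => p.1)
    · intro p hp
      obtain ⟨a, b, h1, h2, h3, rfl, _⟩ := hmem p hp
      exact ⟨a, rfl, h1, by omega⟩
    · intro p hp q hq hpq
      obtain ⟨a, b, h1, h2, h3, rfl, he⟩ := hmem p hp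
      obtain ⟨a', b', h1', h2', h3', rfl, he'⟩ := hmem q hq
      have hrel : L.a * ((a:ℝ) - a') + L.b * ((b:ℝ) - b') = 0 := by
        linear_combination he - he'
      have hda : a ≠ a' := by
        rintro rfl
        have hbb : (b:ℝ) = b' := by
          have : L.b * ((b:ℝ) - b') = 0 := by linarith [hrel]
          have := mul_eq_zero.mp this
          rcases this with h | h
          · exact absurd h hb
          · linarith
        exact hpq (by rw [hbb])
      have hnot1 : ¬ (a - a' = 1 ∨ a - a' = -1) := by
        intro h1e
        have hcast : (a:ℝ) - a' = ((a - a' : ℤ) : ℝ) := by push_cast; ring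
        have hca : |(a:ℝ) - a'| = 1 := by rw [hcast]; exact aux_abs_one _ h1e
        have hdb : (b:ℝ) = b' := by
          have habs : |L.b| * |(b:ℝ) - b'| = |L.a| * |(a:ℝ) - a'| := by
            rw [← abs_mul, ← abs_mul]
            have : L.b * ((b:ℝ) - b') = -(L.a * ((a:ℝ) - a')) := by linarith
            rw [this, abs_neg]
          rw [hca, mul_one] at habs
          have hblt : |L.b| * |(b:ℝ) - b'| < |L.b| * 1 := by
            rw [habs, mul_one]; exact hc
          have hlt1 : |(b:ℝ) - b'| < 1 := by
            have hbpos : 0 < |L.b| := abs_pos.mpr hb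
            exact lt_of_mul_lt_mul_left hblt hbpos.le
          have hlt1' : |((b - b' : ℤ) : ℝ)| < 1 := by
            have : ((b - b' : ℤ) : ℝ) = (b:ℝ) - b' := by push_cast; ring
            rw [this]; exact hlt1
          have hz : b - b' = 0 := by
            by_contra h0
            have : (1:ℝ) ≤ |((b - b' : ℤ) : ℝ)| := by
              rw [← Int.cast_abs]
              exact_mod_cast Int.one_le_abs (by omega)
            linarith
          have : b = b' := by omega
          exact_mod_cast congrArg (Int.cast : ℤ → ℝ) this
        have hz2 : L.a * ((a:ℝ) - a') = 0 := by rw [hdb] at hrel; linarith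
        rcases mul_eq_zero.mp hz2 with h | h
        · exact ha h
        · have : a = a' := by exact_mod_cast sub_eq_zero.mp h
          omega
      have h2R : (2:ℝ) ≤ |((a - a' : ℤ):ℝ)| := aux_abs _ (by omega)
      have : ((a - a' : ℤ):ℝ) = (a:ℝ) - a' := by push_cast; ring
      rwa [this] at h2R
  · -- |L.a| = |L.b| : then L.a = -L.b, use u = x + y - 1
    have hanb : L.a = -L.b := by
      rcases abs_eq_abs.mp hc with h | h
      · exact absurd h hab
      · exact h
    apply aux_card k S (fun p => p.1 + p.2 - 1)
    · intro p hp
      obtain ⟨a, b, h1, h2, h3, rfl, _⟩ := hmem p hp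
      exact ⟨a + b - 1, by push_cast; ring, by omega, by omega⟩
    · intro p hp q hq hpq
      obtain ⟨a, b, h1, h2, h3, rfl, he⟩ := hmem p hp
      obtain ⟨a', b', h1', h2', h3', rfl, he'⟩ := hmem q hq
      have hrel : L.a * ((a:ℝ) - a') + L.b * ((b:ℝ) - b') = 0 := by
        linear_combination he - he'
      rw [hanb] at hrel
      have hdd : (a:ℝ) - a' = (b:ℝ) - b' := by
        have : L.b * (((b:ℝ) - b') - ((a:ℝ) - a')) = 0 := by linarith
        rcases mul_eq_zero.mp this with h | h
        · exact absurd h hb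
        · linarith
      have hddz : a - a' = b - b' := by exact_mod_cast (by push_cast; linarith [hdd] : ((a - a' : ℤ):ℝ) = ((b - b' : ℤ):ℝ))
      have hda : a ≠ a' := by
        rintro rfl
        have : b = b' := by omega
        subst this
        exact hpq rfl
      have h2z : (2:ℤ) ≤ |(a + b - 1) - (a' + b' - 1)| := by
        have : a + b - 1 - (a' + b' - 1) = 2 * (a - a') := by omega
        rw [this, abs_mul]
        have : 1 ≤ |a - a'| := Int.one_le_abs (by omega)
        simp only [abs_two]
        nlinarith
      calc (2:ℝ) = ((2:ℤ):ℝ) := by norm_num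
        _ ≤ ((|(a + b - 1) - (a' + b' - 1)| : ℤ) : ℝ) := by exact_mod_cast h2z
        _ = |((a:ℝ) + b - 1) - ((a':ℝ) + b' - 1)| := by rw [Int.cast_abs]; push_cast; ring_nf
  · -- |L.b| < |L.a| : use u = snd
    apply aux_card k S (fun p => p.2)
    · intro p hp
      obtain ⟨a, b, h1, h2, h3, rfl, _⟩ := hmem p hp
      exact ⟨b, rfl, h2, by omega⟩
    · intro p hp q hq hpq
      obtain ⟨a, b, h1, h2, h3, rfl, he⟩ := hmem p hp
      obtain ⟨a', b', h1', h2', h3', rfl, he'⟩ := hmem q hq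
      have hrel : L.a * ((a:ℝ) - a') + L.b * ((b:ℝ) - b') = 0 := by
        linear_combination he - he'
      have hdb : b ≠ b' := by
        rintro rfl
        have haa : (a:ℝ) = a' := by
          have : L.a * ((a:ℝ) - a') = 0 := by linarith [hrel]
          rcases mul_eq_zero.mp this with h | h
          · exact absurd h ha
          · linarith
        exact hpq (by rw [haa])
      have hnot1 : ¬ (b - b' = 1 ∨ b - b' = -1) := by
        intro h1e
        have hcast : (b:ℝ) - b' = ((b - b' : ℤ) : ℝ) := by push_cast; ring
        have hca : |(b:ℝ) - b'| = 1 := by rw [hcast]; exact aux_abs_one _ h1e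
        have hda2 : (a:ℝ) = a' := by
          have habs : |L.a| * |(a:ℝ) - a'| = |L.b| * |(b:ℝ) - b'| := by
            rw [← abs_mul, ← abs_mul]
            have : L.a * ((a:ℝ) - a') = -(L.b * ((b:ℝ) - b')) := by linarith
            rw [this, abs_neg]
          rw [hca, mul_one] at habs
          have hblt : |L.a| * |(a:ℝ) - a'| < |L.a| * 1 := by
            rw [habs, mul_one]; exact hc
          have hlt1 : |(a:ℝ) - a'| < 1 := by
            have hapos : 0 < |L.a| := abs_pos.mpr ha
            exact lt_of_mul_lt_mul_left hblt hapos.le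
          have hlt1' : |((a - a' : ℤ) : ℝ)| < 1 := by
            have : ((a - a' : ℤ) : ℝ) = (a:ℝ) - a' := by push_cast; ring
            rw [this]; exact hlt1
          have hz : a - a' = 0 := by
            by_contra h0
            have : (1:ℝ) ≤ |((a - a' : ℤ) : ℝ)| := by
              rw [← Int.cast_abs]
              exact_mod_cast Int.one_le_abs (by omega)
            linarith
          have : a = a' := by omega
          exact_mod_cast congrArg (Int.cast : ℤ → ℝ) this
        have hz2 : L.b * ((b:ℝ) - b') = 0 := by rw [hda2] at hrel; linarith
        rcases mul_eq_zero.mp hz2 with h | h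
        · exact hb h
        · have : b = b' := by exact_mod_cast sub_eq_zero.mp h
          omega
      have h2R : (2:ℝ) ≤ |((b - b' : ℤ):ℝ)| := aux_abs _ (by omega)
      have : ((b - b' : ℤ):ℝ) = (b:ℝ) - b' := by push_cast; ring
      rwa [this] at h2R
end

section
/- For every n ≥ 3, there exist n distinct lines in the plane, exactly 1 of which is sunny, covering all points (a, b) with a, b positive integers and a + b ≤ n + 1. (Namely, the horizontal lines y = 1, …, n−1 together with the line y = x + (n − 1), which passes through the unique remaining point (1, n).) -/
theorem exists_one_sunny_cover (n : ℕ) (hn : 3 ≤ n) :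
    ∃ ℓ : Fin n → Line,
      Function.Injective (fun i => (ℓ i).toSet) ∧
      Set.ncard {i | (ℓ i).Sunny} = 1 ∧
      (∀ p ∈ triGrid n, ∃ i, p ∈ (ℓ i).toSet) := by
  set ℓ : Fin n → Line := fun i =>
    if h : (i : ℕ) = n - 1 then ⟨1, -1, (n : ℝ) - 1, Or.inl one_ne_zero⟩
    else ⟨0, 1, -(((i : ℕ) : ℝ) + 1), Or.inr one_ne_zero⟩ with hℓ
  have hmem : ∀ (i : Fin n) (p : ℝ × ℝ), p ∈ (ℓ i).toSet ↔
      (if (i : ℕ) = n - 1 then p.1 - p.2 + ((n : ℝ) - 1) = 0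
        else p.2 = ((i : ℕ) : ℝ) + 1) := by
    intro i p
    by_cases h : (i : ℕ) = n - 1 <;>
      simp [hℓ, h, Line.toSet] <;> constructor <;> intro h' <;> linarith
  refine ⟨ℓ, ?_, ?_, ?_⟩
  · intro i j hij
    simp only at hij
    by_cases hi : (i : ℕ) = n - 1 <;> by_cases hj : (j : ℕ) = n - 1
    · exact Fin.ext (hi.trans hj.symm)
    · -- i sunny, j horizontal
      exfalso
      have h1 : ((0 : ℝ), ((j : ℕ) : ℝ) + 1) ∈ (ℓ j).toSet := by
        rw [hmem]; simp [hj]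
      have h2 : ((1 : ℝ), ((j : ℕ) : ℝ) + 1) ∈ (ℓ j).toSet := by
        rw [hmem]; simp [hj]
      rw [← hij, hmem, if_pos hi] at h1 h2
      simp at h1 h2; linarith
    · exfalso
      have h1 : ((0 : ℝ), ((i : ℕ) : ℝ) + 1) ∈ (ℓ i).toSet := by
        rw [hmem]; simp [hi]
      have h2 : ((1 : ℝ), ((i : ℕ) : ℝ) + 1) ∈ (ℓ i).toSet := by
        rw [hmem]; simp [hi]
      rw [hij, hmem, if_pos hj] at h1 h2
      simp at h1 h2; linarith
    · have h1 : ((0 : ℝ), ((i : ℕ) : ℝ) + 1) ∈ (ℓ i).toSet := by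
        rw [hmem]; simp [hi]
      rw [hij, hmem, if_neg hj] at h1
      simp at h1
      have : (j : ℕ) = (i : ℕ) := by exact_mod_cast h1.symm
      exact Fin.ext this.symm
  · have hset : {i : Fin n | (ℓ i).Sunny} = {⟨n - 1, by omega⟩} := by
      ext i
      simp only [Set.mem_setOf_eq, Set.mem_singleton_iff]
      by_cases h : (i : ℕ) = n - 1
      · simp [hℓ, h, Line.Sunny, Fin.ext_iff]
        norm_num
      · simp [hℓ, h, Line.Sunny, Fin.ext_iff]
    rw [hset, Set.ncard_singleton]
  · rintro p ⟨a, b, ha, hb, hab, rfl⟩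
    by_cases hbn : b ≤ (n : ℤ) - 1
    · refine ⟨⟨(b - 1).toNat, by omega⟩, ?_⟩
      rw [hmem]
      have : ((b - 1).toNat : ℕ) ≠ n - 1 := by omega
      rw [if_neg this]
      have hz : ((b - 1).toNat : ℤ) = b - 1 := Int.toNat_of_nonneg (by omega)
      have hcast : (((b - 1).toNat : ℕ) : ℝ) = (b : ℝ) - 1 := by
        exact_mod_cast congrArg (Int.cast : ℤ → ℝ) hz
      simp only [hcast]
      ring
    · have hb' : b = n := by omega
      have ha' : a = 1 := by omega
      refine ⟨⟨n - 1, by omega⟩, ?_⟩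
      rw [hmem]
      simp only [ha', hb', if_pos]
      push_cast
      ring
end

section
/- For every n ≥ 3, there exist n distinct lines in the plane, exactly 3 of which are sunny, covering all points (a, b) with a, b positive integers and a + b ≤ n + 1. (Namely, horizontal lines y = 1, …, n−3 plus three sunny lines covering the translated copy of P_3 given by points with b ≥ n − 2.) -/
/-!
Write `n = m + 3`. The horizontal lines `y = 1, …, m` cover the points of `P_n` with `b ≤ m`; the
remaining points form the copy `P_3 + (0, m)` of `P_3`, which the sunny lines `x = y`,
`2x + y = 5`, `x + 2y = 5`, shifted up by `m`, cover. Lines with the same point set are parallel;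
this separates the sunny lines from each other and from the horizontal ones, and the horizontal
lines are separated by their heights.
-/

open Function

namespace Line

lemma add_direction_mem_toSet {L : Line} {p : ℝ × ℝ} (hp : p ∈ L.toSet) :
    p + (L.b, -L.a) ∈ L.toSet := by
  simp only [toSet, Set.mem_ofPred_eq, Prod.fst_add, Prod.snd_add] at hp ⊢
  linear_combination hp

lemma toSet_nonempty (L : Line) : L.toSet.Nonempty := by
  rcases L.nontriv with ha | hb
  · exact ⟨(-L.c / L.a, 0), by simp only [toSet, Set.mem_ofPred_eq]; field_simp; ring⟩
  · exact ⟨(0, -L.c / L.b), by simp only [toSet, Set.mem_ofPred_eq]; field_simp; ring⟩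

lemma a_mul_b_eq_of_toSet_eq {L M : Line} (h : L.toSet = M.toSet) : L.a * M.b = M.a * L.b := by
  obtain ⟨p, hp⟩ := L.toSet_nonempty
  have hq := add_direction_mem_toSet hp
  rw [h] at hp hq
  simp only [toSet, Set.mem_ofPred_eq, Prod.fst_add, Prod.snd_add] at hp hq
  linear_combination hp - hq

def horizontal (t : ℝ) : Line := ⟨0, 1, -t, Or.inr one_ne_zero⟩

@[simp]
lemma mem_horizontal_toSet {t : ℝ} {p : ℝ × ℝ} : p ∈ (horizontal t).toSet ↔ p.2 = t := by
  simp [horizontal, toSet, add_neg_eq_zero]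

lemma horizontal_toSet_injective : Injective fun t => (horizontal t).toSet := by
  intro s t h
  have hs : ((0 : ℝ), s) ∈ (horizontal s).toSet := mem_horizontal_toSet.2 rfl
  rw [show (horizontal s).toSet = (horizontal t).toSet from h] at hs
  exact mem_horizontal_toSet.1 hs

lemma not_sunny_horizontal (t : ℝ) : ¬ (horizontal t).Sunny := fun h => h.1 rfl

lemma Sunny.toSet_ne_horizontal {L : Line} (hL : L.Sunny) (t : ℝ) :
    L.toSet ≠ (horizontal t).toSet := fun h => by
  simpa [horizontal, hL.1] using a_mul_b_eq_of_toSet_eq h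

def vshift (L : Line) (m : ℝ) : Line := ⟨L.a, L.b, L.c - L.b * m, L.nontriv⟩

lemma mk_mem_vshift_toSet {L : Line} {m x y : ℝ} :
    (x, y) ∈ (L.vshift m).toSet ↔ (x, y - m) ∈ L.toSet := by
  simp only [vshift, toSet, Set.mem_ofPred_eq]
  ring_nf

lemma sunny_vshift {L : Line} {m : ℝ} : (L.vshift m).Sunny ↔ L.Sunny := Iff.rfl

end Line

def sunnyTriple : Fin 3 → Line :=
  ![⟨1, -1, 0, Or.inl one_ne_zero⟩, ⟨2, 1, -5, Or.inl two_ne_zero⟩, ⟨1, 2, -5, Or.inl one_ne_zero⟩]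

lemma sunny_sunnyTriple (i : Fin 3) : (sunnyTriple i).Sunny := by
  fin_cases i <;> norm_num [Line.Sunny, sunnyTriple]

lemma exists_mem_sunnyTriple_of_mem_triGrid_three {p : ℝ × ℝ} (hp : p ∈ triGrid 3) :
    ∃ i, p ∈ (sunnyTriple i).toSet := by
  obtain ⟨a, b, ha, hb, hab, rfl⟩ := hp
  have key : a - b = 0 ∨ 2 * a + b - 5 = 0 ∨ a + 2 * b - 5 = 0 := by omega
  rcases key with h | h | h
  · exact ⟨0, by simpa [sunnyTriple, Line.toSet, sub_eq_add_neg] using congr(($h : ℝ))⟩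
  · exact ⟨1, by simpa [sunnyTriple, Line.toSet, sub_eq_add_neg] using congr(($h : ℝ))⟩
  · exact ⟨2, by simpa [sunnyTriple, Line.toSet, sub_eq_add_neg] using congr(($h : ℝ))⟩

lemma sunnyTriple_vshift_toSet_injective (m : ℝ) :
    Injective fun i => ((sunnyTriple i).vshift m).toSet := by
  intro i j h
  have hslope := Line.a_mul_b_eq_of_toSet_eq h
  revert hslope
  fin_cases i <;> fin_cases j <;> norm_num [sunnyTriple, Line.vshift]

lemma Fin.comp_append {α β : Sort*} {m n : ℕ} (f : α → β) (u : Fin m → α) (v : Fin n → α) :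
    f ∘ Fin.append u v = Fin.append (f ∘ u) (f ∘ v) := by
  funext i
  induction i using Fin.addCases <;> simp

lemma Fin.setOf_append_eq_range_natAdd {α : Sort*} {m n : ℕ} {P : α → Prop} {u : Fin m → α}
    {v : Fin n → α} (hu : ∀ i, ¬ P (u i)) (hv : ∀ j, P (v j)) :
    {i | P (Fin.append u v i)} = Set.range (Fin.natAdd m) := by
  ext i
  induction i using Fin.addCases with
  | left i => simpa [hu, Fin.ext_iff] using fun j => by omega
  | right j => simp [hv]

lemma exists_eq_add_one_or_mem_triGrid_three {m : ℕ} {x y : ℝ} (hp : (x, y) ∈ triGrid (m + 3)) :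
    (∃ k : Fin m, y = k + 1) ∨ (x, y - m) ∈ triGrid 3 := by
  obtain ⟨a, b, ha, hb, hab, hxy⟩ := hp
  simp only [Prod.mk.injEq] at hxy
  obtain ⟨rfl, rfl⟩ := hxy
  by_cases hbm : b ≤ m
  · obtain ⟨k, rfl⟩ : ∃ k : ℕ, b = k + 1 := ⟨(b - 1).toNat, by omega⟩
    exact Or.inl ⟨⟨k, by omega⟩, by push_cast; rfl⟩
  · right
    exact ⟨a, b - m, ha, by omega, by push_cast at hab ⊢; omega, by push_cast; rfl⟩

def sunnyCover (m : ℕ) : Fin (m + 3) → Line :=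
  Fin.append (fun k : Fin m => Line.horizontal (k + 1)) (fun i => (sunnyTriple i).vshift m)

lemma sunnyCover_toSet_injective (m : ℕ) : Injective fun i => (sunnyCover m i).toSet := by
  show Injective (Line.toSet ∘ sunnyCover m)
  rw [sunnyCover, Fin.comp_append, Fin.append_injective_iff]
  refine ⟨?_, ?_, ?_⟩
  · exact Line.horizontal_toSet_injective.comp fun k l h => by simpa [Fin.val_inj] using h
  · exact sunnyTriple_vshift_toSet_injective _
  · intro k i h
    exact (Line.sunny_vshift.2 (sunny_sunnyTriple i)).toSet_ne_horizontal _ h.symm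

lemma sunnyCover_ncard_setOf_sunny (m : ℕ) : {i | (sunnyCover m i).Sunny}.ncard = 3 := by
  rw [sunnyCover, Fin.setOf_append_eq_range_natAdd (fun k => Line.not_sunny_horizontal _)
    (fun i => Line.sunny_vshift.2 (sunny_sunnyTriple i)),
    Set.ncard_range_of_injective (Fin.natAdd_injective 3 m), Nat.card_eq_fintype_card,
    Fintype.card_fin]

lemma exists_mem_sunnyCover_of_mem_triGrid {m : ℕ} {p : ℝ × ℝ} (hp : p ∈ triGrid (m + 3)) :
    ∃ i, p ∈ (sunnyCover m i).toSet := by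
  obtain ⟨x, y⟩ := p
  rcases exists_eq_add_one_or_mem_triGrid_three hp with ⟨k, rfl⟩ | hp3
  · exact ⟨Fin.castAdd 3 k, by simp [sunnyCover]⟩
  · obtain ⟨i, hi⟩ := exists_mem_sunnyTriple_of_mem_triGrid_three hp3
    exact ⟨Fin.natAdd m i, by simpa [sunnyCover, Line.mk_mem_vshift_toSet] using hi⟩

theorem exists_three_sunny_cover (n : ℕ) (hn : 3 ≤ n) :
    ∃ ℓ : Fin n → Line,
      Function.Injective (fun i => (ℓ i).toSet) ∧
      Set.ncard {i | (ℓ i).Sunny} = 3 ∧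
      (∀ p ∈ triGrid n, ∃ i, p ∈ (ℓ i).toSet) := by
  obtain ⟨m, rfl⟩ : ∃ m, n = m + 3 := ⟨n - 3, by omega⟩
  exact ⟨sunnyCover m, sunnyCover_toSet_injective m, sunnyCover_ncard_setOf_sunny m,
    fun p => exists_mem_sunnyCover_of_mem_triGrid⟩
end

section
/- For n ≥ 3, the complete answer to the sunny-lines problem: a nonnegative integer k admits n distinct lines covering all (a,b) ∈ ℤ⁺ × ℤ⁺ with a + b ≤ n+1 with exactly k sunny lines if and only if k ∈ {0, 1, 3}. -/
lemma mem_toSet {L : Line} {x y : ℝ} : (x, y) ∈ L.toSet ↔ L.a * x + L.b * y + L.c = 0 :=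
  Iff.rfl

/-- A sunny line cannot contain two distinct points lying on a common vertical,
horizontal, or antidiagonal direction. -/
lemma sunny_forbidden {M : Line} (hM : M.Sunny) {u v : ℝ × ℝ}
    (h1 : u ∈ M.toSet) (h2 : v ∈ M.toSet)
    (h : u.1 = v.1 ∨ u.2 = v.2 ∨ u.1 + u.2 = v.1 + v.2) (hne : u ≠ v) : False := by
  obtain ⟨x, y⟩ := u
  obtain ⟨x', y'⟩ := v
  simp only [mem_toSet] at h1 h2
  obtain ⟨ha, hb, hab⟩ := hM
  simp only at h
  rcases h with h | h | h
  · subst h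
    have hyy : y ≠ y' := by simpa [Prod.ext_iff] using hne
    have : M.b * (y - y') = 0 := by linarith
    rcases mul_eq_zero.mp this with h' | h'
    · exact hb h'
    · exact hyy (by linarith)
  · subst h
    have hxx : x ≠ x' := by simpa [Prod.ext_iff] using hne
    have : M.a * (x - x') = 0 := by linarith
    rcases mul_eq_zero.mp this with h' | h'
    · exact ha h'
    · exact hxx (by linarith)
  · have hxx : x ≠ x' := by
      rintro rfl
      exact hne (by simp [Prod.ext_iff]; linarith)
    have : (M.a - M.b) * (x - x') = 0 := by linear_combination h1 - h2 - M.b * h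
    rcases mul_eq_zero.mp this with h' | h'
    · exact hab (by linarith)
    · exact hxx (by linarith)

/-- A non-sunny line cannot contain two points in "general position". -/
lemma nonsunny_forbidden {M : Line} (hM : ¬ M.Sunny) {x y x' y' : ℝ}
    (h1 : (x, y) ∈ M.toSet) (h2 : (x', y') ∈ M.toSet)
    (hx : x ≠ x') (hy : y ≠ y') (hs : x + y ≠ x' + y') : False := by
  simp only [mem_toSet] at h1 h2
  have hns : M.a = 0 ∨ M.b = 0 ∨ M.a = M.b := by
    by_contra h
    push_neg at h
    exact hM ⟨h.1, h.2.1, h.2.2⟩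
  rcases hns with h | h | h
  · have hb : M.b ≠ 0 := M.nontriv.resolve_left (by simp [h])
    have : M.b * (y - y') = 0 := by rw [h] at h1 h2; linarith
    rcases mul_eq_zero.mp this with h' | h'
    · exact hb h'
    · exact hy (by linarith)
  · have ha : M.a ≠ 0 := M.nontriv.resolve_right (fun h' => h' h)
    have : M.a * (x - x') = 0 := by rw [h] at h1 h2; linarith
    rcases mul_eq_zero.mp this with h' | h'
    · exact ha h'
    · exact hx (by linarith)
  · have ha : M.a ≠ 0 := by
      rcases M.nontriv with h' | h'
      · exact h'
      · rw [h]; exact h'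
    have : M.a * ((x + y) - (x' + y')) = 0 := by rw [h] at h1 h2 ⊢; linarith
    rcases mul_eq_zero.mp this with h' | h'
    · exact ha h'
    · exact hs (by linarith)

lemma pigeon23 {a b c d e f : Prop} (h1 : a ∨ d) (h2 : b ∨ e) (h3 : c ∨ f)
    (hab : ¬(a ∧ b)) (hac : ¬(a ∧ c)) (hbc : ¬(b ∧ c))
    (hde : ¬(d ∧ e)) (hdf : ¬(d ∧ f)) (hef : ¬(e ∧ f)) : False := by tauto

lemma cover_pair {S T : Line} (hS : S.Sunny) (hT : T.Sunny) (u v w : ℝ × ℝ)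
    (huv : u.1 = v.1 ∨ u.2 = v.2 ∨ u.1 + u.2 = v.1 + v.2) (huv' : u ≠ v)
    (huw : u.1 = w.1 ∨ u.2 = w.2 ∨ u.1 + u.2 = w.1 + w.2) (huw' : u ≠ w)
    (hvw : v.1 = w.1 ∨ v.2 = w.2 ∨ v.1 + v.2 = w.1 + w.2) (hvw' : v ≠ w)
    (hu : u ∈ S.toSet ∨ u ∈ T.toSet) (hv : v ∈ S.toSet ∨ v ∈ T.toSet)
    (hw : w ∈ S.toSet ∨ w ∈ T.toSet) : False :=
  pigeon23 hu hv hw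
    (fun ⟨h, h'⟩ => sunny_forbidden hS h h' huv huv')
    (fun ⟨h, h'⟩ => sunny_forbidden hS h h' huw huw')
    (fun ⟨h, h'⟩ => sunny_forbidden hS h h' hvw hvw')
    (fun ⟨h, h'⟩ => sunny_forbidden hT h h' huv huv')
    (fun ⟨h, h'⟩ => sunny_forbidden hT h h' huw huw')
    (fun ⟨h, h'⟩ => sunny_forbidden hT h h' hvw hvw')

/-- Three lines with exactly the pattern (non-sunny, sunny, sunny) cannot cover the
six points of the `n = 3` triangular grid. -/
lemma no_two_sunny {L S T : Line} (hL : ¬ L.Sunny) (hS : S.Sunny) (hT : T.Sunny)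
    (hcov : ∀ p : ℝ × ℝ, p ∈ ({((1:ℝ),(1:ℝ)), (1,2), (1,3), (2,1), (2,2), (3,1)} : Set (ℝ × ℝ)) →
      p ∈ L.toSet ∨ p ∈ S.toSet ∨ p ∈ T.toSet) : False := by
  have h0 := hcov (1,1) (by norm_num)
  have h1 := hcov (1,2) (by norm_num)
  have h2 := hcov (1,3) (by norm_num)
  have h3 := hcov (2,1) (by norm_num)
  have h4 := hcov (2,2) (by norm_num)
  have h5 := hcov (3,1) (by norm_num)
  have hA04 : ¬(((1:ℝ),(1:ℝ)) ∈ L.toSet ∧ ((2:ℝ),(2:ℝ)) ∈ L.toSet) := by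
    rintro ⟨hu, hv⟩
    exact nonsunny_forbidden hL hu hv (by norm_num) (by norm_num) (by norm_num)
  have hA15 : ¬(((1:ℝ),(2:ℝ)) ∈ L.toSet ∧ ((3:ℝ),(1:ℝ)) ∈ L.toSet) := by
    rintro ⟨hu, hv⟩
    exact nonsunny_forbidden hL hu hv (by norm_num) (by norm_num) (by norm_num)
  have hA23 : ¬(((1:ℝ),(3:ℝ)) ∈ L.toSet ∧ ((2:ℝ),(1:ℝ)) ∈ L.toSet) := by
    rintro ⟨hu, hv⟩
    exact nonsunny_forbidden hL hu hv (by norm_num) (by norm_num) (by norm_num)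
  have hu : (((1:ℝ),(1:ℝ)) ∈ S.toSet ∨ ((1:ℝ),(1:ℝ)) ∈ T.toSet) ∨
      (((2:ℝ),(2:ℝ)) ∈ S.toSet ∨ ((2:ℝ),(2:ℝ)) ∈ T.toSet) := by
    rcases not_and_or.mp hA04 with h | h
    · exact Or.inl (h0.resolve_left h)
    · exact Or.inr (h4.resolve_left h)
  have hv : (((1:ℝ),(2:ℝ)) ∈ S.toSet ∨ ((1:ℝ),(2:ℝ)) ∈ T.toSet) ∨
      (((3:ℝ),(1:ℝ)) ∈ S.toSet ∨ ((3:ℝ),(1:ℝ)) ∈ T.toSet) := by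
    rcases not_and_or.mp hA15 with h | h
    · exact Or.inl (h1.resolve_left h)
    · exact Or.inr (h5.resolve_left h)
  have hw : (((1:ℝ),(3:ℝ)) ∈ S.toSet ∨ ((1:ℝ),(3:ℝ)) ∈ T.toSet) ∨
      (((2:ℝ),(1:ℝ)) ∈ S.toSet ∨ ((2:ℝ),(1:ℝ)) ∈ T.toSet) := by
    rcases not_and_or.mp hA23 with h | h
    · exact Or.inl (h2.resolve_left h)
    · exact Or.inr (h3.resolve_left h)
  rcases hu with hu | hu <;> rcases hv with hv | hv <;> rcases hw with hw | hw <;>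
    exact cover_pair hS hT _ _ _ (by norm_num) (by norm_num [Prod.ext_iff])
      (by norm_num) (by norm_num [Prod.ext_iff]) (by norm_num) (by norm_num [Prod.ext_iff])
      hu hv hw

lemma six_subset_triGrid :
    ({((1:ℝ),(1:ℝ)), (1,2), (1,3), (2,1), (2,2), (3,1)} : Set (ℝ × ℝ)) ⊆ triGrid 3 := by
  intro p hp
  rcases hp with h | h | h | h | h | h <;> subst h
  · exact ⟨1, 1, by norm_num⟩
  · exact ⟨1, 2, by norm_num⟩
  · exact ⟨1, 3, by norm_num⟩
  · exact ⟨2, 1, by norm_num⟩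
  · exact ⟨2, 2, by norm_num⟩
  · exact ⟨3, 1, by norm_num⟩

lemma base3 (ℓ : Fin 3 → Line) (hcov : ∀ p ∈ triGrid 3, ∃ i, p ∈ (ℓ i).toSet) :
    Set.ncard {i | (ℓ i).Sunny} ≠ 2 := by
  intro h2
  have hc : ({i | (ℓ i).Sunny}ᶜ : Set (Fin 3)).ncard = 1 := by
    have h := Set.ncard_add_ncard_compl {i | (ℓ i).Sunny}
    rw [h2] at h
    simp [Nat.card_eq_fintype_card] at h
    omega
  obtain ⟨i₀, hi₀⟩ := Set.ncard_eq_one.mp hc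
  have hns : ¬ (ℓ i₀).Sunny := by
    have : i₀ ∈ ({i | (ℓ i).Sunny}ᶜ : Set (Fin 3)) := by rw [hi₀]; exact rfl
    exact this
  have hsun : ∀ i, i ≠ i₀ → (ℓ i).Sunny := by
    intro i hi
    by_contra h
    have : i ∈ ({i | (ℓ i).Sunny}ᶜ : Set (Fin 3)) := h
    rw [hi₀] at this
    exact hi this
  have hcov' : ∀ p ∈ ({((1:ℝ),(1:ℝ)), (1,2), (1,3), (2,1), (2,2), (3,1)} : Set (ℝ × ℝ)),
      p ∈ (ℓ 0).toSet ∨ p ∈ (ℓ 1).toSet ∨ p ∈ (ℓ 2).toSet := by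
    intro p hp
    obtain ⟨i, hi⟩ := hcov p (six_subset_triGrid hp)
    fin_cases i <;> tauto
  fin_cases i₀
  · exact no_two_sunny hns (hsun 1 (by decide)) (hsun 2 (by decide))
      (fun p hp => hcov' p hp)
  · exact no_two_sunny hns (hsun 0 (by decide)) (hsun 2 (by decide))
      (fun p hp => by have := hcov' p hp; tauto)
  · exact no_two_sunny hns (hsun 0 (by decide)) (hsun 1 (by decide))
      (fun p hp => by have := hcov' p hp; tauto)

lemma exists_bij_cover {n : ℕ} (ℓ : Fin n → Line) (pts : Fin n → ℝ × ℝ)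
    (hcov : ∀ j, ∃ i, pts j ∈ (ℓ i).toSet)
    (hle : ∀ i j j', pts j ∈ (ℓ i).toSet → pts j' ∈ (ℓ i).toSet → j = j') :
    ∃ h : Fin n → Fin n, Function.Bijective h ∧ ∀ j, pts j ∈ (ℓ (h j)).toSet := by
  choose h hh using hcov
  refine ⟨h, ?_, hh⟩
  have hinj : Function.Injective h := fun j j' hjj => hle (h j) j j' (hh j) (hjj ▸ hh j') 
  exact Finite.injective_iff_bijective.mp hinj

lemma set_eq_vert (L : Line) (hb : L.b = 0) (hc : L.c = -L.a) : L.toSet = {p : ℝ × ℝ | p.1 = 1} := by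
  have ha : L.a ≠ 0 := L.nontriv.resolve_right (fun h => h hb)
  ext ⟨x, y⟩
  simp only [Line.toSet, Set.mem_setOf_eq, hb, hc]
  constructor
  · intro h
    have : L.a * (x - 1) = 0 := by ring_nf; ring_nf at h; linarith
    rcases mul_eq_zero.mp this with h' | h'
    · exact absurd h' ha
    · linarith
  · intro h; rw [h]; ring

lemma set_eq_horiz (L : Line) (ha : L.a = 0) (hc : L.c = -L.b) : L.toSet = {p : ℝ × ℝ | p.2 = 1} := by
  have hb : L.b ≠ 0 := L.nontriv.resolve_left (fun h => h ha)
  ext ⟨x, y⟩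
  simp only [Line.toSet, Set.mem_setOf_eq, ha, hc]
  constructor
  · intro h
    have : L.b * (y - 1) = 0 := by ring_nf; ring_nf at h; linarith
    rcases mul_eq_zero.mp this with h' | h'
    · exact absurd h' hb
    · linarith
  · intro h; rw [h]; ring

lemma set_eq_diag (L : Line) (t : ℝ) (hab : L.a = L.b) (hc : L.c = -(L.a * t)) :
    L.toSet = {p : ℝ × ℝ | p.1 + p.2 = t} := by
  have ha : L.a ≠ 0 := by
    rcases L.nontriv with h | h
    · exact h
    · rw [hab]; exact h
  ext ⟨x, y⟩
  simp only [Line.toSet, Set.mem_setOf_eq, ← hab, hc]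
  constructor
  · intro h
    have : L.a * (x + y - t) = 0 := by ring_nf; ring_nf at h; linarith
    rcases mul_eq_zero.mp this with h' | h'
    · exact absurd h' ha
    · linarith
  · intro h
    have : L.a * (x + y - t) = 0 := by rw [h]; ring
    linarith [this]

set_option maxHeartbeats 1000000 in
lemma side_exists {m : ℕ} (hm : 4 ≤ m) (ℓ : Fin m → Line)
    (hcov : ∀ p ∈ triGrid m, ∃ i, p ∈ (ℓ i).toSet) :
    ∃ i, (ℓ i).toSet = {p : ℝ × ℝ | p.1 = 1} ∨ (ℓ i).toSet = {p : ℝ × ℝ | p.2 = 1} ∨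
      (ℓ i).toSet = {p : ℝ × ℝ | p.1 + p.2 = (m : ℝ) + 1} := by
  by_contra hside
  push_neg at hside
  have hm1 : (1:ℝ) ≤ m := by exact_mod_cast Nat.one_le_iff_ne_zero.mpr (by omega)
  -- the three sides, as families of n grid points
  set ptsV : Fin m → ℝ × ℝ := fun j => ((1:ℝ), (j.val:ℝ) + 1) with hptsV
  set ptsH : Fin m → ℝ × ℝ := fun j => ((j.val:ℝ) + 1, (1:ℝ)) with hptsH
  set ptsD : Fin m → ℝ × ℝ := fun j => ((j.val:ℝ) + 1, (m:ℝ) - (j.val:ℝ)) with hptsD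
  have hmemV : ∀ j : Fin m, ptsV j ∈ triGrid m := by
    intro j
    refine ⟨1, (j.val:ℤ) + 1, by norm_num, by omega, ?_, ?_⟩
    · have := j.isLt; omega
    · simp [hptsV]
  have hmemH : ∀ j : Fin m, ptsH j ∈ triGrid m := by
    intro j
    refine ⟨(j.val:ℤ) + 1, 1, by omega, by norm_num, ?_, ?_⟩
    · have := j.isLt; omega
    · simp [hptsH]
  have hmemD : ∀ j : Fin m, ptsD j ∈ triGrid m := by
    intro j
    refine ⟨(j.val:ℤ) + 1, (m:ℤ) - (j.val:ℤ), by omega, ?_, by omega, ?_⟩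
    · have := j.isLt; omega
    · simp [hptsD]
  -- each line meets each side in at most one grid point
  have hleV : ∀ i j j', ptsV j ∈ (ℓ i).toSet → ptsV j' ∈ (ℓ i).toSet → j = j' := by
    intro i j j' h1 h2
    by_contra hne
    rw [hptsV] at h1 h2
    simp only [mem_toSet] at h1 h2
    have hcast : (j.val:ℝ) ≠ (j'.val:ℝ) := by
      intro h
      exact hne (Fin.ext (by exact_mod_cast h))
    have hb0 : (ℓ i).b = 0 := by
      have h3 : (ℓ i).b * ((j.val:ℝ) - (j'.val:ℝ)) = 0 := by linear_combination h1 - h2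
      rcases mul_eq_zero.mp h3 with h' | h'
      · exact h'
      · exact absurd (by linarith) hcast
    have hc : (ℓ i).c = -(ℓ i).a := by rw [hb0] at h1; linarith
    exact (hside i).1 (set_eq_vert _ hb0 hc)
  have hleH : ∀ i j j', ptsH j ∈ (ℓ i).toSet → ptsH j' ∈ (ℓ i).toSet → j = j' := by
    intro i j j' h1 h2
    by_contra hne
    rw [hptsH] at h1 h2
    simp only [mem_toSet] at h1 h2
    have hcast : (j.val:ℝ) ≠ (j'.val:ℝ) := by
      intro h
      exact hne (Fin.ext (by exact_mod_cast h))
    have ha0 : (ℓ i).a = 0 := by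
      have h3 : (ℓ i).a * ((j.val:ℝ) - (j'.val:ℝ)) = 0 := by linear_combination h1 - h2
      rcases mul_eq_zero.mp h3 with h' | h'
      · exact h'
      · exact absurd (by linarith) hcast
    have hc : (ℓ i).c = -(ℓ i).b := by rw [ha0] at h1; linarith
    exact (hside i).2.1 (set_eq_horiz _ ha0 hc)
  have hleD : ∀ i j j', ptsD j ∈ (ℓ i).toSet → ptsD j' ∈ (ℓ i).toSet → j = j' := by
    intro i j j' h1 h2
    by_contra hne
    rw [hptsD] at h1 h2
    simp only [mem_toSet] at h1 h2
    have hcast : (j.val:ℝ) ≠ (j'.val:ℝ) := by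
      intro h
      exact hne (Fin.ext (by exact_mod_cast h))
    have hab : (ℓ i).a = (ℓ i).b := by
      have h3 : ((ℓ i).a - (ℓ i).b) * ((j.val:ℝ) - (j'.val:ℝ)) = 0 := by
        linear_combination h1 - h2
      rcases mul_eq_zero.mp h3 with h' | h'
      · linarith
      · exact absurd (by linarith) hcast
    have hc : (ℓ i).c = -((ℓ i).a * ((m:ℝ) + 1)) := by
      rw [← hab] at h1
      linear_combination h1
    exact (hside i).2.2 (set_eq_diag _ _ hab hc)
  obtain ⟨hV, hVbij, hVprop⟩ := exists_bij_cover ℓ ptsV (fun j => hcov _ (hmemV j)) hleV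
  obtain ⟨hH, hHbij, hHprop⟩ := exists_bij_cover ℓ ptsH (fun j => hcov _ (hmemH j)) hleH
  obtain ⟨hD, hDbij, hDprop⟩ := exists_bij_cover ℓ ptsD (fun j => hcov _ (hmemD j)) hleD
  -- every line passes through one of the three corners
  have hclass : ∀ i, ((1:ℝ),(1:ℝ)) ∈ (ℓ i).toSet ∨ ((1:ℝ),(m:ℝ)) ∈ (ℓ i).toSet ∨
      ((m:ℝ),(1:ℝ)) ∈ (ℓ i).toSet := by
    intro i
    obtain ⟨jV, hjV⟩ := hVbij.2 i
    obtain ⟨jH, hjH⟩ := hHbij.2 i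
    obtain ⟨jD, hjD⟩ := hDbij.2 i
    set p : ℝ := (jV.val:ℝ) + 1 with hp
    set q : ℝ := (jH.val:ℝ) + 1 with hq
    set r : ℝ := (jD.val:ℝ) + 1 with hr
    have hmV : ((1:ℝ), p) ∈ (ℓ i).toSet := by
      have := hVprop jV; rw [hjV] at this; exact this
    have hmH : (q, (1:ℝ)) ∈ (ℓ i).toSet := by
      have := hHprop jH; rw [hjH] at this; exact this
    have hmD : (r, (m:ℝ) + 1 - r) ∈ (ℓ i).toSet := by
      have := hDprop jD; rw [hjD] at this
      have he : ptsD jD = (r, (m:ℝ) + 1 - r) := by rw [hptsD, hr]; simp [Prod.ext_iff]; try ring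
      rwa [he] at this
    have hp1 : 1 ≤ p := by rw [hp]; have : (0:ℝ) ≤ (jV.val:ℝ) := Nat.cast_nonneg _; linarith
    have hq1 : 1 ≤ q := by rw [hq]; have : (0:ℝ) ≤ (jH.val:ℝ) := Nat.cast_nonneg _; linarith
    have hr1 : 1 ≤ r := by rw [hr]; have : (0:ℝ) ≤ (jD.val:ℝ) := Nat.cast_nonneg _; linarith
    have hpm : p ≤ m := by
      rw [hp]; have : (jV.val:ℝ) + 1 ≤ (m:ℝ) := by exact_mod_cast jV.isLt
      linarith
    have hqm : q ≤ m := by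
      rw [hq]; have : (jH.val:ℝ) + 1 ≤ (m:ℝ) := by exact_mod_cast jH.isLt
      linarith
    have hrm : r ≤ m := by
      rw [hr]; have : (jD.val:ℝ) + 1 ≤ (m:ℝ) := by exact_mod_cast jD.isLt
      linarith
    have hmV0 := hmV
    have hmH0 := hmH
    have hmD0 := hmD
    rw [mem_toSet] at hmV hmH hmD
    set a := (ℓ i).a
    set b := (ℓ i).b
    set c := (ℓ i).c
    have ha : a ≠ 0 := by
      intro h
      have hc : c = -b := by rw [h] at hmH; linarith
      exact (hside i).2.1 (set_eq_horiz _ h hc)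
    have hb : b ≠ 0 := by
      intro h
      have hc : c = -a := by rw [h] at hmV; linarith
      exact (hside i).1 (set_eq_vert _ h hc)
    have hab : a ≠ b := by
      intro h
      have hc : c = -(a * ((m:ℝ) + 1)) := by
        rw [← h] at hmD
        linear_combination hmD
      exact (hside i).2.2 (set_eq_diag _ _ h hc)
    set u : ℝ := a / b with hu
    have hua : a = u * b := by rw [hu]; field_simp
    have eqA : u * (q - 1) = p - 1 := by
      have h3 : a * (1 - q) + b * (p - 1) = 0 := by linear_combination hmV - hmH
      rw [hua] at h3
      have h4 : b * (u * (q - 1) - (p - 1)) = 0 := by linear_combination -h3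
      rcases mul_eq_zero.mp h4 with h' | h'
      · exact absurd h' hb
      · linarith
    have eqB : u * (q - r) = (m:ℝ) - r := by
      have h3 : a * (q - r) + b * (r - m) = 0 := by linear_combination hmH - hmD
      rw [hua] at h3
      have h4 : b * (u * (q - r) - ((m:ℝ) - r)) = 0 := by linear_combination h3
      rcases mul_eq_zero.mp h4 with h' | h'
      · exact absurd h' hb
      · linarith
    have eqC : u * (r - 1) = p + r - ((m:ℝ) + 1) := by
      have h3 : a * (r - 1) + b * ((m:ℝ) + 1 - r - p) = 0 := by linear_combination hmD - hmV
      rw [hua] at h3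
      have h4 : b * (u * (r - 1) - (p + r - ((m:ℝ) + 1))) = 0 := by linear_combination h3
      rcases mul_eq_zero.mp h4 with h' | h'
      · exact absurd h' hb
      · linarith
    have hu0 : u ≠ 0 := div_ne_zero ha hb
    have hu1 : u ≠ 1 := by
      intro h
      exact hab (by rw [hu] at h; field_simp at h; exact h)
    rcases lt_trichotomy u 0 with hneg | hzero | hpos
    · -- u < 0 : the line passes through (1,1)
      have hq1' : q = 1 := by
        by_contra hne
        have : 1 < q := lt_of_le_of_ne hq1 (Ne.symm hne)
        nlinarith [eqA]
      have hp1' : p = 1 := by linear_combination -eqA + u * hq1'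
      left
      rwa [hp1'] at hmV0
    · exact absurd hzero hu0
    · rcases lt_trichotomy u 1 with hlt | heq | hgt
      · -- 0 < u < 1 : the line passes through (m, 1)
        have hqr : q = r := by
          rcases lt_trichotomy q r with h | h | h
          · nlinarith [eqB]
          · exact h
          · nlinarith [eqB]
        have hrm' : r = m := by linear_combination eqB - u * hqr
        right; right
        have hqm' : q = m := by rw [hqr, hrm']
        rwa [hqm'] at hmH0
      · exact absurd heq hu1
      · -- u > 1 : the line passes through (1, m)
        have hr1' : r = 1 := by
          by_contra hne
          have : 1 < r := lt_of_le_of_ne hr1 (Ne.symm hne)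
          nlinarith [eqC]
        right; left
        rw [hr1'] at hmD0
        simpa using hmD0
  -- pigeonhole: two distinct lines share a corner
  classical
  have hcard : Fintype.card (Fin 3) < Fintype.card (Fin m) := by simp; omega
  obtain ⟨i, i', hne, hfeq⟩ := Fintype.exists_ne_map_eq_of_card_lt
    (fun i : Fin m => if ((1:ℝ),(1:ℝ)) ∈ (ℓ i).toSet then (0 : Fin 3)
      else if ((1:ℝ),(m:ℝ)) ∈ (ℓ i).toSet then 1 else 2) hcard
  -- uniqueness of the line through a given grid point of a side
  have huniqV : ∀ (j0 : Fin m) i'', ptsV j0 ∈ (ℓ i'').toSet → i'' = hV j0 := by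
    intro j0 i'' hmem
    obtain ⟨j, hj⟩ := hVbij.2 i''
    have h1 : ptsV j ∈ (ℓ i'').toSet := by rw [← hj]; exact hVprop j
    have : j = j0 := hleV i'' j j0 h1 hmem
    rw [← hj, this]
  have huniqH : ∀ (j0 : Fin m) i'', ptsH j0 ∈ (ℓ i'').toSet → i'' = hH j0 := by
    intro j0 i'' hmem
    obtain ⟨j, hj⟩ := hHbij.2 i''
    have h1 : ptsH j ∈ (ℓ i'').toSet := by rw [← hj]; exact hHprop j
    have : j = j0 := hleH i'' j j0 h1 hmem
    rw [← hj, this]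
  have e11 : ((1:ℝ),(1:ℝ)) = ptsH ⟨0, by omega⟩ := by rw [hptsH]; simp
  have e1m : ((1:ℝ),(m:ℝ)) = ptsV ⟨m - 1, by omega⟩ := by
    rw [hptsV]; simp
    have : ((m - 1 : ℕ) : ℝ) = (m:ℝ) - 1 := by
      have : 1 ≤ m := by omega
      push_cast [this]; ring
    rw [this]; ring
  have em1 : ((m:ℝ),(1:ℝ)) = ptsH ⟨m - 1, by omega⟩ := by
    rw [hptsH]; simp
    have : ((m - 1 : ℕ) : ℝ) = (m:ℝ) - 1 := by
      have : 1 ≤ m := by omega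
      push_cast [this]; ring
    rw [this]; ring
  have hshare : (((1:ℝ),(1:ℝ)) ∈ (ℓ i).toSet ∧ ((1:ℝ),(1:ℝ)) ∈ (ℓ i').toSet) ∨
      (((1:ℝ),(m:ℝ)) ∈ (ℓ i).toSet ∧ ((1:ℝ),(m:ℝ)) ∈ (ℓ i').toSet) ∨
      (((m:ℝ),(1:ℝ)) ∈ (ℓ i).toSet ∧ ((m:ℝ),(1:ℝ)) ∈ (ℓ i').toSet) := by
    by_cases a1 : ((1:ℝ),(1:ℝ)) ∈ (ℓ i).toSet <;>
      by_cases b1 : ((1:ℝ),(1:ℝ)) ∈ (ℓ i').toSet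
    · exact Or.inl ⟨a1, b1⟩
    · rw [if_pos a1, if_neg b1] at hfeq
      by_cases b2 : ((1:ℝ),(m:ℝ)) ∈ (ℓ i').toSet
      · rw [if_pos b2] at hfeq; exact absurd hfeq (by decide)
      · rw [if_neg b2] at hfeq; exact absurd hfeq (by decide)
    · rw [if_neg a1, if_pos b1] at hfeq
      by_cases a2 : ((1:ℝ),(m:ℝ)) ∈ (ℓ i).toSet
      · rw [if_pos a2] at hfeq; exact absurd hfeq (by decide)
      · rw [if_neg a2] at hfeq; exact absurd hfeq (by decide)
    · rw [if_neg a1, if_neg b1] at hfeq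
      by_cases a2 : ((1:ℝ),(m:ℝ)) ∈ (ℓ i).toSet <;>
        by_cases b2 : ((1:ℝ),(m:ℝ)) ∈ (ℓ i').toSet
      · exact Or.inr (Or.inl ⟨a2, b2⟩)
      · rw [if_pos a2, if_neg b2] at hfeq; exact absurd hfeq (by decide)
      · rw [if_neg a2, if_pos b2] at hfeq; exact absurd hfeq (by decide)
      · refine Or.inr (Or.inr ⟨?_, ?_⟩)
        · exact ((hclass i).resolve_left a1).resolve_left a2
        · exact ((hclass i').resolve_left b1).resolve_left b2
  rcases hshare with ⟨m1, m2⟩ | ⟨m1, m2⟩ | ⟨m1, m2⟩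
  · rw [e11] at m1 m2
    exact hne ((huniqH _ i m1).trans (huniqH _ i' m2).symm)
  · rw [e1m] at m1 m2
    exact hne ((huniqV _ i m1).trans (huniqV _ i' m2).symm)
  · rw [em1] at m1 m2
    exact hne ((huniqH _ i m1).trans (huniqH _ i' m2).symm)

def shiftLine (L : Line) (dx dy : ℝ) : Line := ⟨L.a, L.b, L.c + L.a * dx + L.b * dy, L.nontriv⟩

lemma shiftLine_toSet (L : Line) (dx dy : ℝ) :
    (shiftLine L dx dy).toSet = (fun p : ℝ × ℝ => (p.1 + dx, p.2 + dy)) ⁻¹' L.toSet := by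
  ext ⟨x, y⟩
  simp only [Line.toSet, shiftLine, Set.mem_preimage, Set.mem_setOf_eq]
  constructor <;> intro h <;> linarith

lemma shiftLine_sunny (L : Line) (dx dy : ℝ) : (shiftLine L dx dy).Sunny ↔ L.Sunny := Iff.rfl

lemma ns_V {L : Line} (h : L.toSet = {p : ℝ × ℝ | p.1 = 1}) : ¬ L.Sunny := by
  have h1 : ((1:ℝ), (0:ℝ)) ∈ L.toSet := by rw [h]; simp
  have h2 : ((1:ℝ), (1:ℝ)) ∈ L.toSet := by rw [h]; simp
  rw [mem_toSet] at h1 h2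
  rintro ⟨ha, hb, hab⟩
  exact hb (by linarith)

lemma ns_H {L : Line} (h : L.toSet = {p : ℝ × ℝ | p.2 = 1}) : ¬ L.Sunny := by
  have h1 : ((0:ℝ), (1:ℝ)) ∈ L.toSet := by rw [h]; simp
  have h2 : ((1:ℝ), (1:ℝ)) ∈ L.toSet := by rw [h]; simp
  rw [mem_toSet] at h1 h2
  rintro ⟨ha, hb, hab⟩
  exact ha (by linarith)

lemma ns_D {L : Line} {t : ℝ} (ht : t ≠ 0) (h : L.toSet = {p : ℝ × ℝ | p.1 + p.2 = t}) :
    ¬ L.Sunny := by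
  have h1 : ((0:ℝ), t) ∈ L.toSet := by rw [h]; simp
  have h2 : (t, (0:ℝ)) ∈ L.toSet := by rw [h]; simp
  rw [mem_toSet] at h1 h2
  rintro ⟨ha, hb, hab⟩
  have : (L.a - L.b) * t = 0 := by linarith
  rcases mul_eq_zero.mp this with h' | h'
  · exact hab (by linarith)
  · exact ht h'

lemma remove_one {n : ℕ} (ℓ : Fin (n + 1) → Line) (i₀ : Fin (n + 1)) (dx dy : ℝ)
    (hinj : Function.Injective fun i => (ℓ i).toSet)
    (hns : ¬ (ℓ i₀).Sunny)
    (hcov' : ∀ p ∈ triGrid n, ∃ i, i ≠ i₀ ∧ (p.1 + dx, p.2 + dy) ∈ (ℓ i).toSet) :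
    ∃ ℓ' : Fin n → Line, (Function.Injective fun i => (ℓ' i).toSet) ∧
      (∀ p ∈ triGrid n, ∃ i, p ∈ (ℓ' i).toSet) ∧
      Set.ncard {i | (ℓ' i).Sunny} = Set.ncard {i | (ℓ i).Sunny} := by
  set ℓ' : Fin n → Line := fun j => shiftLine (ℓ (i₀.succAbove j)) dx dy with hℓ'
  have hsurj : Function.Surjective (fun p : ℝ × ℝ => (p.1 + dx, p.2 + dy)) := by
    intro q
    exact ⟨(q.1 - dx, q.2 - dy), by simp⟩
  refine ⟨ℓ', ?_, ?_, ?_⟩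
  · intro j j' hjj
    simp only [hℓ', shiftLine_toSet] at hjj
    have h2 : (ℓ (i₀.succAbove j)).toSet = (ℓ (i₀.succAbove j')).toSet :=
      Set.preimage_injective.mpr hsurj hjj
    have := hinj h2
    exact Fin.succAbove_right_injective (by exact this)
  · intro p hp
    obtain ⟨i, hi, hmem⟩ := hcov' p hp
    obtain ⟨j, hj⟩ := Fin.exists_succAbove_eq hi
    refine ⟨j, ?_⟩
    rw [hℓ', shiftLine_toSet, hj]
    exact hmem
  · have himg : i₀.succAbove '' {j | (ℓ' j).Sunny} = {i | (ℓ i).Sunny} := by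
      ext i
      constructor
      · rintro ⟨j, hj, rfl⟩
        exact hj
      · intro hi
        have hne : i ≠ i₀ := fun h => hns (h ▸ hi)
        obtain ⟨j, hj⟩ := Fin.exists_succAbove_eq hne
        exact ⟨j, by rw [Set.mem_setOf_eq, hℓ', shiftLine_sunny, hj]; exact hi, hj⟩
    rw [← himg, Set.ncard_image_of_injective _ Fin.succAbove_right_injective]

lemma descent {n : ℕ} (hn : 3 ≤ n) (ℓ : Fin (n + 1) → Line)
    (hinj : Function.Injective fun i => (ℓ i).toSet)
    (hcov : ∀ p ∈ triGrid (n + 1), ∃ i, p ∈ (ℓ i).toSet) :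
    ∃ ℓ' : Fin n → Line, (Function.Injective fun i => (ℓ' i).toSet) ∧
      (∀ p ∈ triGrid n, ∃ i, p ∈ (ℓ' i).toSet) ∧
      Set.ncard {i | (ℓ' i).Sunny} = Set.ncard {i | (ℓ i).Sunny} := by
  obtain ⟨i₀, hi₀⟩ := side_exists (by omega : 4 ≤ n + 1) ℓ hcov
  rcases hi₀ with hV | hH | hD
  · -- vertical side x = 1 : shift by (1, 0)
    refine remove_one ℓ i₀ 1 0 hinj (ns_V hV) ?_
    rintro p ⟨a, b, ha, hb, hab, rfl⟩
    have hmem : (((a:ℝ) + 1), ((b:ℝ) + 0)) ∈ triGrid (n + 1) := by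
      refine ⟨a + 1, b, by omega, by omega, by push_cast; omega, by push_cast; ring_nf⟩
    obtain ⟨i, hi⟩ := hcov _ hmem
    refine ⟨i, ?_, hi⟩
    intro h
    rw [h, hV] at hi
    simp only [Set.mem_setOf_eq] at hi
    have : (a:ℝ) = 0 := by linarith
    have : a = 0 := by exact_mod_cast this
    omega
  · -- horizontal side y = 1 : shift by (0, 1)
    refine remove_one ℓ i₀ 0 1 hinj (ns_H hH) ?_
    rintro p ⟨a, b, ha, hb, hab, rfl⟩
    have hmem : (((a:ℝ) + 0), ((b:ℝ) + 1)) ∈ triGrid (n + 1) := by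
      refine ⟨a, b + 1, by omega, by omega, by push_cast; omega, by push_cast; ring_nf⟩
    obtain ⟨i, hi⟩ := hcov _ hmem
    refine ⟨i, ?_, hi⟩
    intro h
    rw [h, hH] at hi
    simp only [Set.mem_setOf_eq] at hi
    have : (b:ℝ) = 0 := by linarith
    have : b = 0 := by exact_mod_cast this
    omega
  · -- diagonal side x + y = n + 2 : no shift
    refine remove_one ℓ i₀ 0 0 hinj (ns_D (by positivity) hD) ?_
    rintro p ⟨a, b, ha, hb, hab, rfl⟩
    have hmem : (((a:ℝ) + 0), ((b:ℝ) + 0)) ∈ triGrid (n + 1) := by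
      refine ⟨a, b, by omega, by omega, by push_cast; omega, by push_cast; ring_nf⟩
    obtain ⟨i, hi⟩ := hcov _ hmem
    refine ⟨i, ?_, hi⟩
    intro h
    rw [h, hD] at hi
    simp only [Set.mem_setOf_eq] at hi
    have : (a:ℝ) + (b:ℝ) = (n:ℝ) + 1 + 1 := by push_cast at hi; linarith
    have : a + b = (n:ℤ) + 2 := by exact_mod_cast this
    omega

lemma forward (n : ℕ) (hn : 3 ≤ n) : ∀ ℓ : Fin n → Line,
    (Function.Injective fun i => (ℓ i).toSet) →
    (∀ p ∈ triGrid n, ∃ i, p ∈ (ℓ i).toSet) →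
    (Set.ncard {i | (ℓ i).Sunny} = 0 ∨ Set.ncard {i | (ℓ i).Sunny} = 1 ∨
      Set.ncard {i | (ℓ i).Sunny} = 3) := by
  induction n, hn using Nat.le_induction with
  | base =>
    intro ℓ hinj hcov
    have h2 := base3 ℓ hcov
    have h3 : Set.ncard {i | (ℓ i).Sunny} ≤ 3 := by
      have := Set.ncard_le_ncard (Set.subset_univ {i | (ℓ i).Sunny}) (Set.finite_univ)
      rwa [Set.ncard_univ, Nat.card_eq_fintype_card, Fintype.card_fin] at this
    omega
  | succ n hn ih =>
    intro ℓ hinj hcov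
    obtain ⟨ℓ', h1, h2, h3⟩ := descent hn ℓ hinj hcov
    rw [← h3]
    exact ih ℓ' h1 h2

lemma construct_k0 (n : ℕ) (hn : 3 ≤ n) :
    ∃ ℓ : Fin n → Line,
      (Function.Injective fun i => (ℓ i).toSet) ∧
      (∀ p ∈ triGrid n, ∃ i, p ∈ (ℓ i).toSet) ∧
      Set.ncard {i | (ℓ i).Sunny} = 0 := by
  refine ⟨fun i => ⟨1, 1, -((i.val : ℝ) + 2), Or.inl one_ne_zero⟩, ?_, ?_, ?_⟩
  · intro i j hij
    simp only [Set.ext_iff] at hij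
    have h1 := (hij ((i.val:ℝ) + 2, 0)).mp (by rw [mem_toSet]; ring)
    rw [mem_toSet] at h1
    simp at h1
    have : (i.val:ℝ) = (j.val:ℝ) := by linarith
    exact Fin.ext (by exact_mod_cast this)
  · rintro p ⟨a, b, ha, hb, hab, rfl⟩
    have hlt : (a + b - 2).toNat < n := by omega
    refine ⟨⟨(a + b - 2).toNat, hlt⟩, ?_⟩
    rw [mem_toSet]
    have : ((a + b - 2).toNat : ℝ) = (a:ℝ) + (b:ℝ) - 2 := by
      have : ((a + b - 2).toNat : ℤ) = a + b - 2 := by omega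
      exact_mod_cast this
    simp only [this]
    ring
  · have : {i : Fin n | (Line.mk 1 1 (-((i.val : ℝ) + 2)) (Or.inl one_ne_zero)).Sunny} = ∅ := by
      ext i
      simp only [Set.mem_setOf_eq, Set.mem_empty_iff_false, iff_false]
      rintro ⟨-, -, hab⟩
      exact hab rfl
    rw [this, Set.ncard_empty]

lemma construct_k1 (n : ℕ) (hn : 3 ≤ n) :
    ∃ ℓ : Fin n → Line,
      (Function.Injective fun i => (ℓ i).toSet) ∧
      (∀ p ∈ triGrid n, ∃ i, p ∈ (ℓ i).toSet) ∧
      Set.ncard {i | (ℓ i).Sunny} = 1 := by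
  set ℓ : Fin n → Line := fun i =>
    if i.val < n - 1 then ⟨0, 1, -((i.val : ℝ) + 1), Or.inr one_ne_zero⟩
    else ⟨1, -1, (n:ℝ) - 1, Or.inl one_ne_zero⟩ with hℓ
  have hval : ∀ i : Fin n, i.val < n - 1 →
      ℓ i = ⟨0, 1, -((i.val : ℝ) + 1), Or.inr one_ne_zero⟩ := by
    intro i h; rw [hℓ]; simp [h]
  have hval' : ∀ i : Fin n, ¬(i.val < n - 1) →
      ℓ i = ⟨1, -1, (n:ℝ) - 1, Or.inl one_ne_zero⟩ := by
    intro i h; rw [hℓ]; simp [h]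
  have hlast : ∀ i : Fin n, ¬(i.val < n - 1) → i = ⟨n - 1, by omega⟩ := by
    intro i h
    have := i.isLt
    exact Fin.ext (show i.val = n - 1 by omega)
  refine ⟨ℓ, ?_, ?_, ?_⟩
  · intro i j hij
    simp only [Set.ext_iff] at hij
    by_cases hi : i.val < n - 1 <;> by_cases hj : j.val < n - 1
    · rw [hval i hi, hval j hj] at hij
      have h1 := (hij (0, (i.val:ℝ) + 1)).mp (by rw [mem_toSet]; ring)
      rw [mem_toSet] at h1
      have : (i.val:ℝ) = (j.val:ℝ) := by simp at h1; linarith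
      exact Fin.ext (by exact_mod_cast this)
    · exfalso
      rw [hval i hi, hval' j hj] at hij
      have h1 := (hij (1, (n:ℝ))).mpr (by rw [mem_toSet]; ring)
      have h2 := (hij (0, (n:ℝ) - 1)).mpr (by rw [mem_toSet]; ring)
      rw [mem_toSet] at h1 h2
      simp at h1 h2
      linarith
    · exfalso
      rw [hval' i hi, hval j hj] at hij
      have h1 := (hij (1, (n:ℝ))).mp (by rw [mem_toSet]; ring)
      have h2 := (hij (0, (n:ℝ) - 1)).mp (by rw [mem_toSet]; ring)
      rw [mem_toSet] at h1 h2
      simp at h1 h2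
      linarith
    · rw [hlast i hi, hlast j hj]
  · rintro p ⟨a, b, ha, hb, hab, rfl⟩
    by_cases hbn : b ≤ (n:ℤ) - 1
    · have hlt : (b - 1).toNat < n - 1 := by omega
      refine ⟨⟨(b - 1).toNat, by omega⟩, ?_⟩
      rw [hval _ hlt, mem_toSet]
      have : ((b - 1).toNat : ℝ) = (b:ℝ) - 1 := by
        have : ((b - 1).toNat : ℤ) = b - 1 := by omega
        exact_mod_cast this
      simp only [this]
      ring
    · have hb' : b = n := by omega
      have ha' : a = 1 := by omega
      refine ⟨⟨n - 1, by omega⟩, ?_⟩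
      rw [hval' _ (by simp), mem_toSet, ha', hb']
      push_cast
      ring
  · have : {i : Fin n | (ℓ i).Sunny} = {⟨n - 1, by omega⟩} := by
      ext i
      simp only [Set.mem_setOf_eq, Set.mem_singleton_iff]
      constructor
      · intro hs
        by_cases hi : i.val < n - 1
        · exfalso
          rw [hval i hi] at hs
          exact hs.1 rfl
        · exact hlast i hi
      · rintro rfl
        rw [hval' _ (by simp)]
        refine ⟨one_ne_zero, by norm_num, by norm_num⟩
    rw [this, Set.ncard_singleton]

lemma construct_k3 (n : ℕ) (hn : 3 ≤ n) :
    ∃ ℓ : Fin n → Line,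
      (Function.Injective fun i => (ℓ i).toSet) ∧
      (∀ p ∈ triGrid n, ∃ i, p ∈ (ℓ i).toSet) ∧
      Set.ncard {i | (ℓ i).Sunny} = 3 := by
  set A : Line := ⟨1, -1, 0, Or.inl one_ne_zero⟩ with hA
  set B : Line := ⟨1, 2, -5, Or.inl one_ne_zero⟩ with hB
  set C : Line := ⟨2, 1, -5, Or.inl two_ne_zero⟩ with hC
  set ℓ : Fin n → Line := fun i =>
    if i.val = 0 then A else if i.val = 1 then B else if i.val = 2 then C
    else ⟨1, 1, -((i.val : ℝ) + 2), Or.inl one_ne_zero⟩ with hℓ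
  have hv0 : ∀ i : Fin n, i.val = 0 → ℓ i = A := fun i h => by rw [hℓ]; simp [h]
  have hv1 : ∀ i : Fin n, i.val = 1 → ℓ i = B := fun i h => by rw [hℓ]; simp [h]
  have hv2 : ∀ i : Fin n, i.val = 2 → ℓ i = C := fun i h => by rw [hℓ]; simp [h]
  have hvd : ∀ i : Fin n, 3 ≤ i.val →
      ℓ i = ⟨1, 1, -((i.val : ℝ) + 2), Or.inl one_ne_zero⟩ := fun i h => by
    rw [hℓ]
    have h0 : ¬ i.val = 0 := by omega
    have h1 : ¬ i.val = 1 := by omega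
    have h2 : ¬ i.val = 2 := by omega
    simp [h0, h1, h2]
  -- membership computations for the three sunny lines
  have hmA : ∀ x y : ℝ, ((x, y) ∈ A.toSet ↔ x - y = 0) := by
    intro x y; rw [mem_toSet, hA]; constructor <;> intro <;> simp_all <;> linarith
  have hmB : ∀ x y : ℝ, ((x, y) ∈ B.toSet ↔ x + 2*y - 5 = 0) := by
    intro x y; rw [mem_toSet, hB]; constructor <;> intro <;> simp_all <;> linarith
  have hmC : ∀ x y : ℝ, ((x, y) ∈ C.toSet ↔ 2*x + y - 5 = 0) := by
    intro x y; rw [mem_toSet, hC]; constructor <;> intro <;> simp_all <;> linarith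
  have hmD : ∀ (t : ℝ) (x y : ℝ),
      ((x, y) ∈ (Line.mk 1 1 (-t) (Or.inl one_ne_zero)).toSet ↔ x + y - t = 0) := by
    intro t x y; rw [mem_toSet]; constructor <;> intro <;> simp_all <;> linarith
  refine ⟨ℓ, ?_, ?_, ?_⟩
  · -- injectivity of the line sets
    intro i j hij
    have hcase : ∀ x : Fin n, x.val = 0 ∨ x.val = 1 ∨ x.val = 2 ∨ 3 ≤ x.val := by
      intro x; omega
    have key : ∀ i j : Fin n, (ℓ i).toSet = (ℓ j).toSet → i.val < j.val → False := by
      intro i j hij hlt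
      rcases hcase i with hi | hi | hi | hi <;> rcases hcase j with hj | hj | hj | hj <;>
        try omega
      -- A vs B
      · rw [hv0 i hi, hv1 j hj] at hij
        have h1 := hij ▸ (hmA 0 0).mpr (by norm_num)
        rw [hmB] at h1; norm_num at h1
      -- A vs C
      · rw [hv0 i hi, hv2 j hj] at hij
        have h1 := hij ▸ (hmA 0 0).mpr (by norm_num)
        rw [hmC] at h1; norm_num at h1
      -- A vs D
      · rw [hv0 i hi, hvd j hj] at hij
        have h1 := hij ▸ (hmA 0 0).mpr (by norm_num)
        rw [hmD] at h1
        have : (0:ℝ) ≤ (j.val:ℝ) := Nat.cast_nonneg _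
        linarith
      -- B vs C
      · rw [hv1 i hi, hv2 j hj] at hij
        have h1 := hij ▸ (hmB 5 0).mpr (by norm_num)
        rw [hmC] at h1; norm_num at h1
      -- B vs D
      · rw [hv1 i hi, hvd j hj] at hij
        have h1 := hij ▸ (hmB 5 0).mpr (by norm_num)
        have h2 := hij ▸ (hmB 1 2).mpr (by norm_num)
        rw [hmD] at h1 h2
        linarith
      -- C vs D
      · rw [hv2 i hi, hvd j hj] at hij
        have h1 := hij ▸ (hmC 0 5).mpr (by norm_num)
        have h2 := hij ▸ (hmC 2 1).mpr (by norm_num)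
        rw [hmD] at h1 h2
        linarith
      -- D vs D
      · rw [hvd i hi, hvd j hj] at hij
        have h1 := hij ▸ (hmD ((i.val:ℝ)+2) ((i.val:ℝ)+2) 0).mpr (by ring)
        rw [hmD] at h1
        have : (i.val:ℝ) = (j.val:ℝ) := by linarith
        have : i.val = j.val := by exact_mod_cast this
        omega
    rcases lt_trichotomy i.val j.val with h | h | h
    · exact absurd hij (fun hh => key i j hh h)
    · exact Fin.ext h
    · exact absurd hij (fun hh => key j i hh.symm h)
  · -- coverage
    rintro p ⟨a, b, ha, hb, hab, rfl⟩
    by_cases hs : 5 ≤ a + b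
    · have h3 : 3 ≤ (a + b - 2).toNat := by omega
      have hlt : (a + b - 2).toNat < n := by omega
      refine ⟨⟨(a + b - 2).toNat, hlt⟩, ?_⟩
      rw [hvd _ h3, mem_toSet]
      have hcast : (((a + b - 2).toNat : ℕ) : ℝ) = (a:ℝ) + (b:ℝ) - 2 := by
        have : (((a + b - 2).toNat : ℕ) : ℤ) = a + b - 2 := by omega
        exact_mod_cast this
      simp only [Fin.val_mk, hcast]
      ring
    · -- the six small points
      have ha3 : a ≤ 3 := by omega
      have hb3 : b ≤ 3 := by omega
      interval_cases a <;> interval_cases b <;> first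
        | exact absurd hab (by omega)
        | exact absurd hs (by omega)
        | (refine ⟨⟨0, by omega⟩, ?_⟩
           rw [hv0 _ rfl,
             show ((((1:ℤ):ℝ)), (((1:ℤ):ℝ))) = ((1:ℝ), (1:ℝ)) by norm_num, hmA]
           norm_num)
        | (refine ⟨⟨0, by omega⟩, ?_⟩
           rw [hv0 _ rfl,
             show ((((2:ℤ):ℝ)), (((2:ℤ):ℝ))) = ((2:ℝ), (2:ℝ)) by norm_num, hmA]
           norm_num)
        | (refine ⟨⟨1, by omega⟩, ?_⟩
           rw [hv1 _ rfl,
             show ((((1:ℤ):ℝ)), (((2:ℤ):ℝ))) = ((1:ℝ), (2:ℝ)) by norm_num, hmB]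
           norm_num)
        | (refine ⟨⟨1, by omega⟩, ?_⟩
           rw [hv1 _ rfl,
             show ((((3:ℤ):ℝ)), (((1:ℤ):ℝ))) = ((3:ℝ), (1:ℝ)) by norm_num, hmB]
           norm_num)
        | (refine ⟨⟨2, by omega⟩, ?_⟩
           rw [hv2 _ rfl,
             show ((((2:ℤ):ℝ)), (((1:ℤ):ℝ))) = ((2:ℝ), (1:ℝ)) by norm_num, hmC]
           norm_num)
        | (refine ⟨⟨2, by omega⟩, ?_⟩
           rw [hv2 _ rfl,
             show ((((1:ℤ):ℝ)), (((3:ℤ):ℝ))) = ((1:ℝ), (3:ℝ)) by norm_num, hmC]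
           norm_num)
  · -- exactly three sunny lines
    have hcase : ∀ x : Fin n, x.val = 0 ∨ x.val = 1 ∨ x.val = 2 ∨ 3 ≤ x.val := by
      intro x; omega
    have hset : {i : Fin n | (ℓ i).Sunny} =
        {(⟨0, by omega⟩ : Fin n), ⟨1, by omega⟩, ⟨2, by omega⟩} := by
      ext i
      simp only [Set.mem_setOf_eq, Set.mem_insert_iff, Set.mem_singleton_iff]
      constructor
      · intro hs
        rcases hcase i with h | h | h | h
        · exact Or.inl (Fin.ext h)
        · exact Or.inr (Or.inl (Fin.ext h))
        · exact Or.inr (Or.inr (Fin.ext h))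
        · exfalso
          rw [hvd i h] at hs
          exact hs.2.2 rfl
      · rintro (rfl | rfl | rfl)
        · rw [hv0 _ rfl]
          exact ⟨one_ne_zero, by norm_num, by norm_num⟩
        · rw [hv1 _ rfl]
          exact ⟨one_ne_zero, by norm_num, by norm_num⟩
        · rw [hv2 _ rfl]
          exact ⟨two_ne_zero, by norm_num, by norm_num⟩
    rw [hset]
    rw [Set.ncard_insert_of_notMem (by simp [Fin.ext_iff]) (Set.toFinite _),
      Set.ncard_insert_of_notMem (by simp [Fin.ext_iff]) (Set.toFinite _),
      Set.ncard_singleton]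

theorem sunny_lines_classification (n : ℕ) (hn : 3 ≤ n) (k : ℕ) :
    (∃ ℓ : Fin n → Line,
      Function.Injective (fun i => (ℓ i).toSet) ∧
      (∀ p ∈ triGrid n, ∃ i, p ∈ (ℓ i).toSet) ∧
      Set.ncard {i | (ℓ i).Sunny} = k) ↔ k = 0 ∨ k = 1 ∨ k = 3 := by
  constructor
  · rintro ⟨ℓ, hinj, hcov, hk⟩
    have h := forward n hn ℓ hinj hcov
    rw [hk] at h
    exact h
  · rintro (rfl | rfl | rfl)
    · exact construct_k0 n hn
    · exact construct_k1 n hn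
    · exact construct_k3 n hn
end
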